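/- arXiv:math/0606756 — 5 statements merged into one kernel-verified Lean document; each statement's English description precedes it below -/
import Mathlib

section
/- If f : ℍⁿ → ℍ is a twice continuously differentiable function and A is an ℍ-linear transformation of ℍⁿ (viewed as a right ℍ-vector space), then the quaternionic Hessian of the composed function q ↦ f(Aq) satisfies (∂²f(Aq)/∂q̄_i ∂q_j) = A* · (∂²f/∂q̄_i ∂q_j)(Aq) · A, where A* is the quaternionic conjugate transpose of A. -/
open Quaternion

noncomputable section

/-- The quaternion unit `i`. -/
def qi : ℍ[ℝ] := ⟨0,1,0,0⟩
/-- The quaternion unit `j`. -/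
def qj : ℍ[ℝ] := ⟨0,0,1,0⟩
/-- The quaternion unit `k`. -/
def qk : ℍ[ℝ] := ⟨0,0,0,1⟩

/-- Partial derivative of `F : ℍⁿ → ℍ` at `x` in the real direction `u` placed in the
`m`-th quaternionic coordinate. -/
def pd {n : ℕ} (m : Fin n) (u : ℍ[ℝ]) (F : (Fin n → ℍ[ℝ]) → ℍ[ℝ]) (x : Fin n → ℍ[ℝ]) : ℍ[ℝ] :=
  fderiv ℝ F x (Pi.single m u)

/-- The Dirac operator `∂/∂q̄_m`: `∂F/∂t + i·∂F/∂x + j·∂F/∂y + k·∂F/∂z` in the `m`-th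
quaternionic coordinate `q_m = t + xi + yj + zk`. -/
def diracBar {n : ℕ} (m : Fin n) (F : (Fin n → ℍ[ℝ]) → ℍ[ℝ]) (x : Fin n → ℍ[ℝ]) : ℍ[ℝ] :=
  pd m 1 F x + qi * pd m qi F x + qj * pd m qj F x + qk * pd m qk F x

/-- The Dirac operator `∂/∂q_m`: `∂F/∂t − (∂F/∂x)·i − (∂F/∂y)·j − (∂F/∂z)·k`. -/
def dirac {n : ℕ} (m : Fin n) (F : (Fin n → ℍ[ℝ]) → ℍ[ℝ]) (x : Fin n → ℍ[ℝ]) : ℍ[ℝ] :=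
  pd m 1 F x - pd m qi F x * qi - pd m qj F x * qj - pd m qk F x * qk


lemma a_decomp (a : ℍ[ℝ]) : a = a.re • (1:ℍ[ℝ]) + a.imI • qi + a.imJ • qj + a.imK • qk := by
  ext <;> simp only [Quaternion.re_add, Quaternion.imI_add, Quaternion.imJ_add, Quaternion.imK_add, Quaternion.re_mul, Quaternion.imI_mul, Quaternion.imJ_mul, Quaternion.imK_mul, Quaternion.re_smul, Quaternion.imI_smul, Quaternion.imJ_smul, Quaternion.imK_smul] <;> simp [qi, qj, qk]

lemma quat_id1 (v1 vi vj vk a : ℍ[ℝ]) :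
    ((a).re • v1 + (a).imI • vi + (a).imJ • vj + (a).imK • vk)
      - ((a*qi).re • v1 + (a*qi).imI • vi + (a*qi).imJ • vj + (a*qi).imK • vk) * qi
      - ((a*qj).re • v1 + (a*qj).imI • vi + (a*qj).imJ • vj + (a*qj).imK • vk) * qj
      - ((a*qk).re • v1 + (a*qk).imI • vi + (a*qk).imJ • vj + (a*qk).imK • vk) * qk
    = (v1 - vi * qi - vj * qj - vk * qk) * a := by
  ext <;> simp only [Quaternion.re_add, Quaternion.imI_add, Quaternion.imJ_add, Quaternion.imK_add, Quaternion.re_sub, Quaternion.imI_sub, Quaternion.imJ_sub, Quaternion.imK_sub, Quaternion.re_star, Quaternion.imI_star, Quaternion.imJ_star, Quaternion.imK_star, Quaternion.re_mul, Quaternion.imI_mul, Quaternion.imJ_mul, Quaternion.imK_mul, Quaternion.re_smul, Quaternion.imI_smul, Quaternion.imJ_smul, Quaternion.imK_smul] <;> simp [qi, qj, qk] <;> ring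

lemma quat_id2 (v1 vi vj vk a : ℍ[ℝ]) :
    ((a).re • v1 + (a).imI • vi + (a).imJ • vj + (a).imK • vk)
      + qi * ((a*qi).re • v1 + (a*qi).imI • vi + (a*qi).imJ • vj + (a*qi).imK • vk)
      + qj * ((a*qj).re • v1 + (a*qj).imI • vi + (a*qj).imJ • vj + (a*qj).imK • vk)
      + qk * ((a*qk).re • v1 + (a*qk).imI • vi + (a*qk).imJ • vj + (a*qk).imK • vk)
    = star a * (v1 + qi * vi + qj * vj + qk * vk) := by
  ext <;> simp only [Quaternion.re_add, Quaternion.imI_add, Quaternion.imJ_add, Quaternion.imK_add, Quaternion.re_sub, Quaternion.imI_sub, Quaternion.imJ_sub, Quaternion.imK_sub, Quaternion.re_star, Quaternion.imI_star, Quaternion.imJ_star, Quaternion.imK_star, Quaternion.re_mul, Quaternion.imI_mul, Quaternion.imJ_mul, Quaternion.imK_mul, Quaternion.re_smul, Quaternion.imI_smul, Quaternion.imJ_smul, Quaternion.imK_smul] <;> simp [qi, qj, qk] <;> ring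

lemma pd_lin {n : ℕ} (m : Fin n) (a : ℍ[ℝ]) (F : (Fin n → ℍ[ℝ]) → ℍ[ℝ]) (x : Fin n → ℍ[ℝ]) :
    pd m a F x = a.re • pd m 1 F x + a.imI • pd m qi F x + a.imJ • pd m qj F x
      + a.imK • pd m qk F x := by
  unfold pd
  conv_lhs => rw [a_decomp a]
  rw [Pi.single_add, Pi.single_add, Pi.single_add, Pi.single_smul, Pi.single_smul,
    Pi.single_smul, Pi.single_smul]
  simp [map_add, map_smul]

def mvL {n : ℕ} (A : Matrix (Fin n) (Fin n) ℍ[ℝ]) : (Fin n → ℍ[ℝ]) →L[ℝ] (Fin n → ℍ[ℝ]) :=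
  LinearMap.toContinuousLinearMap
    { toFun := A.mulVec
      map_add' := fun v w => Matrix.mulVec_add A v w
      map_smul' := fun c v => by
        funext r
        simp [Matrix.mulVec, dotProduct, mul_smul_comm, Finset.smul_sum] }

lemma mvL_apply {n : ℕ} (A : Matrix (Fin n) (Fin n) ℍ[ℝ]) (v : Fin n → ℍ[ℝ]) :
    mvL A v = A.mulVec v := rfl

lemma pd_comp {n : ℕ} (m : Fin n) (u : ℍ[ℝ]) (F : (Fin n → ℍ[ℝ]) → ℍ[ℝ])
    (A : Matrix (Fin n) (Fin n) ℍ[ℝ]) (x : Fin n → ℍ[ℝ])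
    (hF : DifferentiableAt ℝ F (A.mulVec x)) :
    pd m u (fun z => F (A.mulVec z)) x = ∑ k, pd k (A k m * u) F (A.mulVec x) := by
  unfold pd
  have h1 : (fun z => F (A.mulVec z)) = F ∘ (mvL A) := by
    funext z; simp [mvL_apply]
  rw [h1, fderiv_comp x (by rwa [mvL_apply]) (mvL A).differentiableAt,
    (mvL A).fderiv]
  have h2 : (mvL A) (Pi.single m u) = ∑ k, Pi.single k (A k m * u) := by
    rw [mvL_apply]
    funext r
    simp [Matrix.mulVec, dotProduct, Pi.single_apply, Finset.sum_apply,
      mul_ite, mul_zero]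
  simp only [ContinuousLinearMap.coe_comp', Function.comp_apply, h2, map_sum, mvL_apply]

lemma pd_sum {n N : ℕ} (m : Fin n) (u : ℍ[ℝ]) (G : Fin N → ((Fin n → ℍ[ℝ]) → ℍ[ℝ]))
    (x : Fin n → ℍ[ℝ]) (hG : ∀ l, DifferentiableAt ℝ (G l) x) :
    pd m u (fun y => ∑ l, G l y) x = ∑ l, pd m u (G l) x := by
  unfold pd
  rw [fderiv_fun_sum fun l _ => hG l]
  simp

lemma pd_mul_const {n : ℕ} (m : Fin n) (u : ℍ[ℝ]) (G : (Fin n → ℍ[ℝ]) → ℍ[ℝ]) (c : ℍ[ℝ])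
    (x : Fin n → ℍ[ℝ]) (hG : DifferentiableAt ℝ G x) :
    pd m u (fun y => G y * c) x = pd m u G x * c := by
  unfold pd
  rw [fderiv_mul_const' hG]
  rfl

lemma dirac_mul_aux {n : ℕ} (l : Fin n) (F : (Fin n → ℍ[ℝ]) → ℍ[ℝ]) (y : Fin n → ℍ[ℝ])
    (a : ℍ[ℝ]) :
    pd l a F y - pd l (a*qi) F y * qi - pd l (a*qj) F y * qj - pd l (a*qk) F y * qk
      = dirac l F y * a := by
  rw [pd_lin l a, pd_lin l (a*qi), pd_lin l (a*qj), pd_lin l (a*qk)]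
  exact quat_id1 _ _ _ _ a

lemma diracBar_mul_aux {n : ℕ} (k : Fin n) (F : (Fin n → ℍ[ℝ]) → ℍ[ℝ]) (y : Fin n → ℍ[ℝ])
    (a : ℍ[ℝ]) :
    pd k a F y + qi * pd k (a*qi) F y + qj * pd k (a*qj) F y + qk * pd k (a*qk) F y
      = star a * diracBar k F y := by
  rw [pd_lin k a, pd_lin k (a*qi), pd_lin k (a*qj), pd_lin k (a*qk)]
  exact quat_id2 _ _ _ _ a

lemma dirac_comp {n : ℕ} (j : Fin n) (F : (Fin n → ℍ[ℝ]) → ℍ[ℝ])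
    (A : Matrix (Fin n) (Fin n) ℍ[ℝ]) (x : Fin n → ℍ[ℝ])
    (hF : DifferentiableAt ℝ F (A.mulVec x)) :
    dirac j (fun z => F (A.mulVec z)) x = ∑ l, dirac l F (A.mulVec x) * A l j := by
  unfold dirac
  rw [pd_comp j 1 F A x hF, pd_comp j qi F A x hF, pd_comp j qj F A x hF,
    pd_comp j qk F A x hF, Finset.sum_mul, Finset.sum_mul, Finset.sum_mul,
    ← Finset.sum_sub_distrib, ← Finset.sum_sub_distrib, ← Finset.sum_sub_distrib]
  refine Finset.sum_congr rfl fun l _ => ?_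
  rw [mul_one]
  exact dirac_mul_aux l F (A.mulVec x) (A l j)

lemma diracBar_comp {n : ℕ} (i : Fin n) (H : (Fin n → ℍ[ℝ]) → ℍ[ℝ])
    (A : Matrix (Fin n) (Fin n) ℍ[ℝ]) (x : Fin n → ℍ[ℝ])
    (hH : DifferentiableAt ℝ H (A.mulVec x)) :
    diracBar i (fun y => H (A.mulVec y)) x = ∑ k, star (A k i) * diracBar k H (A.mulVec x) := by
  unfold diracBar
  rw [pd_comp i 1 H A x hH, pd_comp i qi H A x hH, pd_comp i qj H A x hH,
    pd_comp i qk H A x hH, Finset.mul_sum, Finset.mul_sum, Finset.mul_sum,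
    ← Finset.sum_add_distrib, ← Finset.sum_add_distrib, ← Finset.sum_add_distrib]
  refine Finset.sum_congr rfl fun k _ => ?_
  rw [mul_one]
  exact diracBar_mul_aux k H (A.mulVec x) (A k i)

lemma diracBar_sum {n N : ℕ} (m : Fin n) (G : Fin N → ((Fin n → ℍ[ℝ]) → ℍ[ℝ]))
    (x : Fin n → ℍ[ℝ]) (hG : ∀ l, DifferentiableAt ℝ (G l) x) :
    diracBar m (fun y => ∑ l, G l y) x = ∑ l, diracBar m (G l) x := by
  unfold diracBar
  rw [pd_sum m 1 G x hG, pd_sum m qi G x hG, pd_sum m qj G x hG, pd_sum m qk G x hG,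
    Finset.mul_sum, Finset.mul_sum, Finset.mul_sum,
    ← Finset.sum_add_distrib, ← Finset.sum_add_distrib, ← Finset.sum_add_distrib]

lemma diracBar_mul_const {n : ℕ} (m : Fin n) (G : (Fin n → ℍ[ℝ]) → ℍ[ℝ]) (c : ℍ[ℝ])
    (x : Fin n → ℍ[ℝ]) (hG : DifferentiableAt ℝ G x) :
    diracBar m (fun y => G y * c) x = diracBar m G x * c := by
  unfold diracBar
  rw [pd_mul_const m 1 G c x hG, pd_mul_const m qi G c x hG, pd_mul_const m qj G c x hG,
    pd_mul_const m qk G c x hG]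
  noncomm_ring


/-- For a `C²` function `f : ℍⁿ → ℍ` and an `ℍ`-linear transformation `A` of `ℍⁿ`
(as a right `ℍ`-vector space, acting by `q ↦ A·q`), the quaternionic Hessian satisfies
`(∂²f(Aq)/∂q̄_i∂q_j) = A* (∂²f/∂q̄_i∂q_j)(Aq) A`. -/
theorem hessian_linear_transform {n : ℕ} (f : (Fin n → ℍ[ℝ]) → ℍ[ℝ]) (hf : ContDiff ℝ 2 f)
    (A : Matrix (Fin n) (Fin n) ℍ[ℝ]) (x : Fin n → ℍ[ℝ]) (i j : Fin n) :
    diracBar i (fun y => dirac j (fun z => f (A.mulVec z)) y) x =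
      ∑ k, ∑ l, star (A k i) * diracBar k (fun y => dirac l f y) (A.mulVec x) * A l j := by
  have hf1 : Differentiable ℝ f := hf.differentiable (by norm_num)
  -- each `dirac l f` is C¹
  have hd : ∀ l : Fin n, ContDiff ℝ 1 (dirac l f) := by
    intro l
    have hfd : ContDiff ℝ 1 (fderiv ℝ f) := hf.fderiv_right (by norm_num)
    have h : ∀ u : ℍ[ℝ], ContDiff ℝ 1 (fun w => pd l u f w) := fun u =>
      hfd.clm_apply contDiff_const
    exact (((h 1).sub ((h qi).mul contDiff_const)).sub ((h qj).mul contDiff_const)).sub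
      ((h qk).mul contDiff_const)
  -- step 1 : rewrite the inner function
  have step1 : (fun y => dirac j (fun z => f (A.mulVec z)) y)
      = fun y => ∑ l, dirac l f (A.mulVec y) * A l j := by
    funext y
    exact dirac_comp j f A y (hf1 _)
  rw [step1]
  -- differentiability of the summands
  have hdiff : ∀ (l : Fin n) (y : Fin n → ℍ[ℝ]),
      DifferentiableAt ℝ (fun w => dirac l f (A.mulVec w) * A l j) y := by
    intro l y
    exact ((((hd l).differentiable one_ne_zero).comp (mvL A).differentiable).differentiableAt).mul_const _
  rw [diracBar_sum i _ x fun l => hdiff l x]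
  rw [Finset.sum_comm]
  refine Finset.sum_congr rfl fun l _ => ?_
  have : diracBar i (fun y => dirac l f (A.mulVec y) * A l j) x
      = diracBar i (fun y => dirac l f (A.mulVec y)) x * A l j :=
    diracBar_mul_const i _ _ x
      (((hd l).differentiable one_ne_zero).comp (mvL A).differentiable).differentiableAt
  rw [this, diracBar_comp i (dirac l f) A x (((hd l).differentiable one_ne_zero) (A.mulVec x)),
    Finset.sum_mul]
end
end

section
/- The Moore determinant of a complex hermitian n×n matrix, considered as a quaternionic hyperhermitian matrix via the standard embedding ℂ ⊂ ℍ, is equal to its usual complex determinant. -/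
open Quaternion Matrix

noncomputable section

/-- The four real components of a quaternion. -/
def qcomp (q : ℍ[ℝ]) : Fin 4 → ℝ := ![q.re, q.imI, q.imJ, q.imK]

/-- The quaternion units `1, i, j, k`. -/
def qunit : Fin 4 → ℍ[ℝ] := ![1, ⟨0,1,0,0⟩, ⟨0,0,1,0⟩, ⟨0,0,0,1⟩]

/-- The `4n×4n` real symmetric matrix `ᴿA` of the real bilinear form
`(x,y) ↦ Re(Σ conj(x_i) a_{ij} y_j)` on `ℝ⁴ⁿ`, the realization of `ℍⁿ`, in the basis
`e_i·1, e_i·i, e_i·j, e_i·k`. -/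
def realMat {n : ℕ} (A : Matrix (Fin n) (Fin n) ℍ[ℝ]) :
    Matrix (Fin n × Fin 4) (Fin n × Fin 4) ℝ :=
  Matrix.of fun p r => (star (qunit p.2) * A p.1 r.1 * qunit r.2).re

/-- The real coordinates of the entries of a quaternionic matrix. -/
def coords {n : ℕ} (A : Matrix (Fin n) (Fin n) ℍ[ℝ]) : Fin n × Fin n × Fin 4 → ℝ :=
  fun t => qcomp (A t.1 t.2.1) t.2.2

/-- `P` is the Moore determinant on hyperhermitian `n×n` quaternionic matrices:
a polynomial function (in the real coordinates of the entries) satisfying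
`det(ᴿA) = P(A)⁴` for all hyperhermitian `A`, and `P(Id) = 1`. -/
def IsMooreDet (n : ℕ) (P : Matrix (Fin n) (Fin n) ℍ[ℝ] → ℝ) : Prop :=
  (∃ p : MvPolynomial (Fin n × Fin n × Fin 4) ℝ,
    ∀ A : Matrix (Fin n) (Fin n) ℍ[ℝ], A.IsHermitian → P A = MvPolynomial.eval (coords A) p) ∧
  (∀ A : Matrix (Fin n) (Fin n) ℍ[ℝ], A.IsHermitian → (realMat A).det = (P A) ^ 4) ∧
  P 1 = 1

/-- The standard embedding `ℂ ⊂ ℍ` (span of `1` and `i`). -/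
def toQuat (c : ℂ) : ℍ[ℝ] := ⟨c.re, c.im, 0, 0⟩

/-! ### Auxiliary material -/

open Kronecker Polynomial

theorem toQuat_star (c : ℂ) : toQuat ((starRingEnd ℂ) c) = star (toQuat c) := by
  ext <;> simp only [Quaternion.re_star, Quaternion.imI_star, Quaternion.imJ_star,
    Quaternion.imK_star] <;> simp [toQuat]

theorem map_herm {n : ℕ} {A : Matrix (Fin n) (Fin n) ℂ} (hA : A.IsHermitian) :
    (A.map toQuat).IsHermitian := by
  refine Matrix.ext fun i j => ?_
  rw [conjTranspose_apply, map_apply, map_apply, ← toQuat_star]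
  exact congrArg toQuat (hA.apply i j)

theorem toQuat_zero : toQuat 0 = 0 := by ext <;> simp [toQuat]
theorem toQuat_one : toQuat 1 = 1 := by ext <;> simp [toQuat]

theorem map_one_toQuat (n : ℕ) :
    (1 : Matrix (Fin n) (Fin n) ℂ).map toQuat = 1 :=
  Matrix.map_one toQuat toQuat_zero toQuat_one

/-- The real `2n×2n` realization of a complex matrix. -/
def cmat {n : ℕ} (A : Matrix (Fin n) (Fin n) ℂ) :
    Matrix (Fin n × Fin 2) (Fin n × Fin 2) ℝ :=
  Matrix.of fun p r => ![![(A p.1 r.1).re, -(A p.1 r.1).im], ![(A p.1 r.1).im, (A p.1 r.1).re]] p.2 r.2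

def esum (n : ℕ) : ((Fin n × Fin 2) ⊕ (Fin n × Fin 2)) ≃ (Fin n × Fin 4) where
  toFun x := Sum.elim (fun p => (p.1, ⟨p.2.1, by omega⟩)) (fun p => (p.1, ⟨p.2.1 + 2, by omega⟩)) x
  invFun p := ![Sum.inl (p.1, 0), Sum.inl (p.1, 1), Sum.inr (p.1, 0), Sum.inr (p.1, 1)] p.2
  left_inv := by rintro (⟨i, a⟩ | ⟨i, a⟩) <;> fin_cases a <;> rfl
  right_inv := by rintro ⟨i, s⟩; fin_cases s <;> rfl

theorem realMat_eq {n : ℕ} (A : Matrix (Fin n) (Fin n) ℂ) :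
    realMat (A.map toQuat) =
      (fromBlocks (cmat A) 0 0 (cmat A)).submatrix (esum n).symm (esum n).symm := by
  ext ⟨i, s⟩ ⟨j, t⟩
  fin_cases s <;> fin_cases t <;>
    simp only [realMat, Matrix.of_apply, Quaternion.re_mul, Quaternion.imI_mul,
      Quaternion.imJ_mul, Quaternion.imK_mul, Quaternion.re_star, Quaternion.imI_star,
      Quaternion.imJ_star, Quaternion.imK_star] <;>
    simp [qunit, toQuat, esum, cmat, fromBlocks]

theorem det_realMat {n : ℕ} (A : Matrix (Fin n) (Fin n) ℂ) :
    (realMat (A.map toQuat)).det = (cmat A).det ^ 2 := by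
  rw [realMat_eq, det_submatrix_equiv_self, det_fromBlocks_zero₁₂, sq]

def Qm : Matrix (Fin 2) (Fin 2) ℂ := !![1, 1; Complex.I, -Complex.I]
def Qi : Matrix (Fin 2) (Fin 2) ℂ := !![1/2, -Complex.I/2; 1/2, Complex.I/2]
def E00 : Matrix (Fin 2) (Fin 2) ℂ := !![1, 0; 0, 0]
def E11 : Matrix (Fin 2) (Fin 2) ℂ := !![0, 0; 0, 1]

theorem hQQi : Qm * Qi = 1 := by
  ext a b
  fin_cases a <;> fin_cases b <;>
    simp [Qm, Qi, Matrix.mul_apply, Fin.sum_univ_two] <;> ring_nf <;>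
    simp [Complex.ext_iff]

def e2 (n : ℕ) : (Fin n × Fin 2) ≃ (Fin n ⊕ Fin n) where
  toFun p := ![Sum.inl p.1, Sum.inr p.1] p.2
  invFun := Sum.elim (fun i => (i, 0)) (fun i => (i, 1))
  left_inv := by rintro ⟨i, a⟩; fin_cases a <;> rfl
  right_inv := by rintro (i | i) <;> rfl

def Dm {n : ℕ} (A : Matrix (Fin n) (Fin n) ℂ) :
    Matrix (Fin n × Fin 2) (Fin n × Fin 2) ℂ :=
  (A.map (starRingEnd ℂ)) ⊗ₖ E00 + A ⊗ₖ E11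

theorem Dm_eq {n : ℕ} (A : Matrix (Fin n) (Fin n) ℂ) :
    Dm A = (fromBlocks (A.map (starRingEnd ℂ)) 0 0 A).submatrix (e2 n) (e2 n) := by
  ext ⟨i, a⟩ ⟨j, b⟩
  fin_cases a <;> fin_cases b <;>
    simp [Dm, e2, E00, E11, fromBlocks, kroneckerMap_apply]

theorem det_Dm {n : ℕ} (A : Matrix (Fin n) (Fin n) ℂ) :
    (Dm A).det = (Complex.normSq A.det : ℂ) := by
  rw [Dm_eq, det_submatrix_equiv_self, det_fromBlocks_zero₁₂,
    ← RingHom.mapMatrix_apply, ← RingHom.map_det, mul_comm, Complex.mul_conj]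

theorem cmat_conj {n : ℕ} (A : Matrix (Fin n) (Fin n) ℂ) :
    (cmat A).map (Complex.ofReal) = ((1 : Matrix (Fin n) (Fin n) ℂ) ⊗ₖ Qm) * Dm A
      * ((1 : Matrix (Fin n) (Fin n) ℂ) ⊗ₖ Qi) := by
  rw [Dm, Matrix.mul_add, Matrix.add_mul, ← mul_kronecker_mul, ← mul_kronecker_mul,
    ← mul_kronecker_mul, ← mul_kronecker_mul, Matrix.one_mul, Matrix.mul_one,
    Matrix.one_mul, Matrix.mul_one]
  have h1 : Qm * E00 * Qi = !![1/2, -Complex.I/2; Complex.I/2, 1/2] := by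
    ext a b
    fin_cases a <;> fin_cases b <;>
      simp [Qm, Qi, E00, Matrix.mul_apply, Fin.sum_univ_two] <;> ring_nf <;>
      norm_num [Complex.I_sq]
  have h2 : Qm * E11 * Qi = !![1/2, Complex.I/2; -Complex.I/2, 1/2] := by
    ext a b
    fin_cases a <;> fin_cases b <;>
      simp [Qm, Qi, E11, Matrix.mul_apply, Fin.sum_univ_two] <;> ring_nf <;>
      norm_num [Complex.I_sq]
  rw [h1, h2]
  ext ⟨i, a⟩ ⟨j, b⟩
  fin_cases a <;> fin_cases b <;>
    simp [cmat, kroneckerMap_apply, Complex.ext_iff] <;> norm_num <;> ring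

theorem det_cmat {n : ℕ} (A : Matrix (Fin n) (Fin n) ℂ) :
    (cmat A).det = Complex.normSq A.det := by
  have hS : ((1 : Matrix (Fin n) (Fin n) ℂ) ⊗ₖ Qm) * ((1 : Matrix (Fin n) (Fin n) ℂ) ⊗ₖ Qi)
      = 1 := by
    rw [← mul_kronecker_mul, Matrix.one_mul, hQQi, one_kronecker_one]
  have h := congrArg Matrix.det (cmat_conj A)
  have hrfl : (cmat A).map Complex.ofReal = Complex.ofRealHom.mapMatrix (cmat A) := rfl
  rw [hrfl, ← RingHom.map_det, Matrix.det_mul, Matrix.det_mul, det_Dm] at h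
  have h2 : ((1 : Matrix (Fin n) (Fin n) ℂ) ⊗ₖ Qm).det * ((1 : Matrix (Fin n) (Fin n) ℂ) ⊗ₖ Qi).det = 1 := by
    rw [← Matrix.det_mul, hS, Matrix.det_one]
  apply Complex.ofReal_injective
  rw [show ((cmat A).det : ℂ) = Complex.ofRealHom (cmat A).det from rfl, h]
  calc ((1 : Matrix (Fin n) (Fin n) ℂ) ⊗ₖ Qm).det * ↑(Complex.normSq A.det) * ((1 : Matrix (Fin n) (Fin n) ℂ) ⊗ₖ Qi).det
      = (((1 : Matrix (Fin n) (Fin n) ℂ) ⊗ₖ Qm).det * ((1 : Matrix (Fin n) (Fin n) ℂ) ⊗ₖ Qi).det) * ↑(Complex.normSq A.det) := by ring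
    _ = _ := by rw [h2, one_mul]

/-! ### Polynomial path machinery -/

theorem re_eval_real (p : Polynomial ℂ) (t : ℝ) :
    (p.eval (t : ℂ)).re = Polynomial.eval t (p.sum fun k a => Polynomial.monomial k a.re) := by
  rw [Polynomial.eval_eq_sum, Polynomial.sum_def, Polynomial.sum_def, Complex.re_sum,
    Polynomial.eval_finset_sum]
  refine Finset.sum_congr rfl fun k _ => ?_
  rw [Polynomial.eval_monomial, Complex.mul_re]
  simp [← Complex.ofReal_pow]

theorem eval_mv_aeval {σ : Type*} (q : MvPolynomial σ ℝ) (g : σ → Polynomial ℝ) (t : ℝ) :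
    Polynomial.eval t (MvPolynomial.aeval g q) =
      MvPolynomial.eval (fun v => Polynomial.eval t (g v)) q := by
  rw [MvPolynomial.aeval_def]
  rw [show Polynomial.eval t (MvPolynomial.eval₂ (algebraMap ℝ (Polynomial ℝ)) g q)
      = Polynomial.evalRingHom t (MvPolynomial.eval₂ (algebraMap ℝ (Polynomial ℝ)) g q) from rfl,
    MvPolynomial.eval₂_comp_left (Polynomial.evalRingHom t) (algebraMap ℝ (Polynomial ℝ)) g q]
  rw [← MvPolynomial.eval₂_id]
  congr 1
  ext x
  simp

/-- The segment from the identity to `A` inside hermitian matrices. -/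
def pathC {n : ℕ} (A : Matrix (Fin n) (Fin n) ℂ) (t : ℝ) : Matrix (Fin n) (Fin n) ℂ :=
  ((1 - t : ℝ) : ℂ) • 1 + ((t : ℝ) : ℂ) • A

theorem pathC_herm {n : ℕ} {A : Matrix (Fin n) (Fin n) ℂ} (hA : A.IsHermitian) (t : ℝ) :
    (pathC A t).IsHermitian := by
  unfold Matrix.IsHermitian pathC
  rw [conjTranspose_add, conjTranspose_smul, conjTranspose_smul, hA.eq,
    (Matrix.isHermitian_one).eq]
  simp [Complex.star_def, Complex.conj_ofReal]

theorem pathC_zero {n : ℕ} (A : Matrix (Fin n) (Fin n) ℂ) : pathC A 0 = 1 := by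
  simp [pathC]

theorem pathC_one {n : ℕ} (A : Matrix (Fin n) (Fin n) ℂ) : pathC A 1 = A := by
  simp [pathC]

/-- The matrix of polynomials representing the path. -/
def Lmat {n : ℕ} (A : Matrix (Fin n) (Fin n) ℂ) : Matrix (Fin n) (Fin n) (Polynomial ℂ) :=
  Matrix.of fun i j => Polynomial.C ((1 : Matrix (Fin n) (Fin n) ℂ) i j) * (1 - Polynomial.X)
    + Polynomial.C (A i j) * Polynomial.X

theorem Lmat_eval {n : ℕ} (A : Matrix (Fin n) (Fin n) ℂ) (t : ℝ) :
    (Polynomial.evalRingHom (t : ℂ)).mapMatrix (Lmat A) = pathC A t := by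
  ext i j
  simp only [RingHom.mapMatrix_apply, Matrix.map_apply, Lmat, Matrix.of_apply, pathC,
    Matrix.add_apply, Matrix.smul_apply, smul_eq_mul, coe_evalRingHom, eval_add, eval_mul,
    eval_C, eval_sub, eval_one, eval_X]
  push_cast
  ring

/-- The real polynomial `t ↦ Re det (pathC A t)`. -/
def Gpoly {n : ℕ} (A : Matrix (Fin n) (Fin n) ℂ) : Polynomial ℝ :=
  ((Lmat A).det).sum fun k a => Polynomial.monomial k a.re

theorem eval_Gpoly {n : ℕ} (A : Matrix (Fin n) (Fin n) ℂ) (t : ℝ) :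
    (Gpoly A).eval t = ((pathC A t).det).re := by
  rw [Gpoly, ← re_eval_real]
  rw [show Polynomial.eval ((t : ℝ) : ℂ) (Lmat A).det
      = Polynomial.evalRingHom ((t : ℝ) : ℂ) (Lmat A).det from rfl,
    RingHom.map_det, Lmat_eval]

/-- The coordinates of the path as real polynomials in `t`. -/
def gcoord {n : ℕ} (A : Matrix (Fin n) (Fin n) ℂ) (v : Fin n × Fin n × Fin 4) : Polynomial ℝ :=
  Polynomial.C (coords ((1 : Matrix (Fin n) (Fin n) ℂ).map toQuat) v) * (1 - Polynomial.X)
    + Polynomial.C (coords (A.map toQuat) v) * Polynomial.X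

theorem eval_gcoord {n : ℕ} (A : Matrix (Fin n) (Fin n) ℂ) (t : ℝ) (v : Fin n × Fin n × Fin 4) :
    (gcoord A v).eval t = coords ((pathC A t).map toQuat) v := by
  obtain ⟨i, j, s⟩ := v
  simp only [gcoord, coords, Matrix.map_apply, eval_add, eval_mul, eval_C, eval_sub, eval_one,
    eval_X, pathC, Matrix.add_apply, Matrix.smul_apply, smul_eq_mul]
  fin_cases s <;>
    simp [qcomp, toQuat, Complex.add_re, Complex.add_im, Complex.mul_re, Complex.mul_im,
      Complex.ofReal_re, Complex.ofReal_im] <;> ring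

/-- The Moore determinant of a complex hermitian matrix, considered as a quaternionic
hyperhermitian matrix via `ℂ ⊂ ℍ`, equals its usual complex determinant. -/
theorem mooreDet_complex_hermitian {n : ℕ} (P : Matrix (Fin n) (Fin n) ℍ[ℝ] → ℝ)
    (hP : IsMooreDet n P) (A : Matrix (Fin n) (Fin n) ℂ) (hA : A.IsHermitian) :
    (A.map toQuat).IsHermitian ∧ P (A.map toQuat) = (A.det).re := by
  refine ⟨map_herm hA, ?_⟩
  obtain ⟨⟨q, hq⟩, hdet, hone⟩ := hP
  set F : Polynomial ℝ := MvPolynomial.aeval (gcoord A) q with hFdef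
  set G : Polynomial ℝ := Gpoly A with hGdef
  have hF : ∀ t : ℝ, F.eval t = P ((pathC A t).map toQuat) := by
    intro t
    rw [hFdef, eval_mv_aeval, hq _ (map_herm (pathC_herm hA t))]
    have hfun : (fun v => Polynomial.eval t (gcoord A v)) = coords ((pathC A t).map toQuat) :=
      funext (eval_gcoord A t)
    rw [hfun]
  have hG : ∀ t : ℝ, G.eval t = ((pathC A t).det).re := fun t => eval_Gpoly A t
  have key : ∀ t : ℝ, (F.eval t) ^ 4 = (G.eval t) ^ 4 := by
    intro t
    rw [hF, hG, ← hdet _ (map_herm (pathC_herm hA t)), det_realMat, det_cmat]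
    have him : ((pathC A t).det).im = 0 := by
      have h1 : star (pathC A t).det = (pathC A t).det := by
        rw [← Matrix.det_conjTranspose, (pathC_herm hA t).eq]
      exact Complex.conj_eq_iff_im.mp h1
    rw [Complex.normSq_apply, him]
    ring
  have hpoly : F ^ 4 = G ^ 4 :=
    Polynomial.funext fun t => by rw [Polynomial.eval_pow, Polynomial.eval_pow, key]
  have hfac : (F - G) * ((F + G) * (F ^ 2 + G ^ 2)) = 0 := by
    calc (F - G) * ((F + G) * (F ^ 2 + G ^ 2)) = F ^ 4 - G ^ 4 := by ring
      _ = 0 := by rw [hpoly, sub_self]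
  have e0F : F.eval 0 = 1 := by
    rw [hF 0, pathC_zero, map_one_toQuat, hone]
  have e0G : G.eval 0 = 1 := by
    rw [hG 0, pathC_zero, Matrix.det_one, Complex.one_re]
  rcases mul_eq_zero.mp hfac with h | h
  · have hFG : F = G := sub_eq_zero.mp h
    have := congrArg (Polynomial.eval 1) hFG
    rw [hF 1, hG 1, pathC_one] at this
    exact this
  · rcases mul_eq_zero.mp h with h' | h'
    · exfalso
      have := congrArg (Polynomial.eval 0) h'
      rw [Polynomial.eval_add, e0F, e0G, Polynomial.eval_zero] at this
      norm_num at this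
    · exfalso
      have := congrArg (Polynomial.eval 0) h'
      rw [Polynomial.eval_add, Polynomial.eval_pow, Polynomial.eval_pow, e0F, e0G,
        Polynomial.eval_zero] at this
      norm_num at this
end
end

section
/- For any hyperhermitian n×n quaternionic matrix A and any quaternionic n×n matrix C, the Moore determinant satisfies det(C* A C) = det(A) · det(C* C). -/
open Quaternion Matrix

noncomputable section

-- basic lemmas
lemma sum_qcomp_smul (q : ℍ[ℝ]) : ∑ a : Fin 4, qcomp q a • qunit a = q := by
  simp [Fin.sum_univ_four, qcomp]
  ext <;> simp [Quaternion.re_smul, Quaternion.imI_smul, Quaternion.imJ_smul, Quaternion.imK_smul] <;> simp [qunit]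

lemma re_sum {ι : Type*} (s : Finset ι) (f : ι → ℍ[ℝ]) :
    (∑ i ∈ s, f i).re = ∑ i ∈ s, (f i).re := by
  induction s using Finset.cons_induction <;> simp [*]

lemma imI_sum {ι : Type*} (s : Finset ι) (f : ι → ℍ[ℝ]) :
    (∑ i ∈ s, f i).imI = ∑ i ∈ s, (f i).imI := by
  induction s using Finset.cons_induction <;> simp [*]

lemma imJ_sum {ι : Type*} (s : Finset ι) (f : ι → ℍ[ℝ]) :
    (∑ i ∈ s, f i).imJ = ∑ i ∈ s, (f i).imJ := by
  induction s using Finset.cons_induction <;> simp [*]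

lemma imK_sum {ι : Type*} (s : Finset ι) (f : ι → ℍ[ℝ]) :
    (∑ i ∈ s, f i).imK = ∑ i ∈ s, (f i).imK := by
  induction s using Finset.cons_induction <;> simp [*]

lemma re_expand_left (q z : ℍ[ℝ]) :
    ∑ a : Fin 4, qcomp q a * (star (qunit a) * z).re = (star q * z).re := by
  conv_rhs => rw [← sum_qcomp_smul q]
  rw [star_sum, Finset.sum_mul, re_sum]
  refine Finset.sum_congr rfl fun a _ => ?_
  simp [Quaternion.star_smul, smul_mul_assoc]

lemma re_expand_right (q z : ℍ[ℝ]) :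
    ∑ a : Fin 4, qcomp q a * (z * qunit a).re = (z * q).re := by
  conv_rhs => rw [← sum_qcomp_smul q]
  rw [Finset.mul_sum, re_sum]
  refine Finset.sum_congr rfl fun a _ => ?_
  simp [mul_smul_comm, mul_comm]


def rmul {n : ℕ} (C : Matrix (Fin n) (Fin n) ℍ[ℝ]) :
    Matrix (Fin n × Fin 4) (Fin n × Fin 4) ℝ :=
  Matrix.of fun q p => qcomp (C q.1 p.1 * qunit p.2) q.2

lemma realMat_conj {n : ℕ} (A C : Matrix (Fin n) (Fin n) ℍ[ℝ]) :
    realMat (Cᴴ * A * C) = (rmul C)ᵀ * realMat A * rmul C := by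
  rw [Matrix.mul_assoc Cᴴ A C, Matrix.mul_assoc ((rmul C)ᵀ) (realMat A) (rmul C)]
  ext ⟨p, s⟩ ⟨r, t⟩
  have inner : ∀ i (a : Fin 4), (realMat A * rmul C) (i,a) (r,t)
      = ∑ j, ((star (qunit a) * A i j) * (C j r * qunit t)).re := by
    intro i a
    rw [Matrix.mul_apply, Fintype.sum_prod_type]
    refine Finset.sum_congr rfl fun j _ => ?_
    rw [← re_expand_right (C j r * qunit t) (star (qunit a) * A i j)]
    refine Finset.sum_congr rfl fun b _ => ?_
    simp only [realMat, rmul, Matrix.of_apply, mul_assoc]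
    ring
  rw [Matrix.mul_apply, Fintype.sum_prod_type]
  have lhs : (star (qunit s) * (Cᴴ * (A * C)) p r * qunit t).re
      = ∑ i, ∑ j, (star (C i p * qunit s) * (A i j * (C j r * qunit t))).re := by
    rw [Matrix.mul_apply, Finset.mul_sum, Finset.sum_mul, re_sum]
    refine Finset.sum_congr rfl fun i _ => ?_
    rw [Matrix.mul_apply, Finset.mul_sum, Finset.mul_sum, Finset.sum_mul, re_sum]
    refine Finset.sum_congr rfl fun j _ => ?_
    simp only [Matrix.conjTranspose_apply, StarMul.star_mul, mul_assoc]
  show (star (qunit s) * (Cᴴ * (A * C)) p r * qunit t).re = _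
  rw [lhs]
  refine Finset.sum_congr rfl fun i _ => ?_
  conv_lhs => rw [show (fun j => (star (C i p * qunit s) * (A i j * (C j r * qunit t))).re) = fun j => ∑ a : Fin 4, qcomp (C i p * qunit s) a * (star (qunit a) * (A i j * (C j r * qunit t))).re from funext fun j => (re_expand_left _ _).symm]
  rw [Finset.sum_comm]
  refine Finset.sum_congr rfl fun a _ => ?_
  rw [inner i a, Finset.mul_sum]
  refine Finset.sum_congr rfl fun j _ => ?_
  simp only [Matrix.transpose_apply, rmul, Matrix.of_apply, mul_assoc]

lemma realMat_one {n : ℕ} : realMat (1 : Matrix (Fin n) (Fin n) ℍ[ℝ]) = 1 := by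
  ext ⟨p, s⟩ ⟨r, t⟩
  simp only [realMat, Matrix.of_apply, Matrix.one_apply, Prod.mk.injEq]
  by_cases h : p = r
  · subst h
    simp only [if_pos rfl, true_and]
    fin_cases s <;> fin_cases t <;>
      simp [Quaternion.ext_iff, Quaternion.re_mul, Quaternion.re_star,
        Quaternion.imI_star, Quaternion.imJ_star, Quaternion.imK_star] <;> simp [qunit]
  · simp [h]


lemma pointwise_pow {n : ℕ} {P : Matrix (Fin n) (Fin n) ℍ[ℝ] → ℝ} (hP : IsMooreDet n P)
    (A C : Matrix (Fin n) (Fin n) ℍ[ℝ]) (hA : A.IsHermitian) :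
    (P (Cᴴ * A * C)) ^ 4 = (P A * P (Cᴴ * C)) ^ 4 := by
  obtain ⟨-, hdet, -⟩ := hP
  have h1 := hdet _ (isHermitian_conjTranspose_mul_mul C hA)
  have h2 := hdet A hA
  have h3 := hdet _ (isHermitian_conjTranspose_mul_self C)
  have e1 : (realMat (Cᴴ * A * C)).det = (realMat A).det * (rmul C).det ^ 2 := by
    rw [realMat_conj, Matrix.det_mul, Matrix.det_mul, Matrix.det_transpose]
    ring
  have e3 : (realMat (Cᴴ * C)).det = (rmul C).det ^ 2 := by
    have : Cᴴ * C = Cᴴ * 1 * C := by rw [Matrix.mul_one]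
    rw [this, realMat_conj, realMat_one, Matrix.mul_one, Matrix.det_mul,
      Matrix.det_transpose, sq]
  rw [h1] at e1
  rw [h2] at e1
  rw [h3] at e3
  rw [mul_pow, e1, e3]

section PolyFun
variable {V : Type*}

def PolyFun (f : (V → ℝ) → ℝ) : Prop :=
  ∃ p : MvPolynomial V ℝ, ∀ x, f x = MvPolynomial.eval x p

namespace PolyFun

lemma const (c : ℝ) : PolyFun (V := V) fun _ => c := ⟨MvPolynomial.C c, by simp⟩

lemma coord (v : V) : PolyFun fun x : V → ℝ => x v := ⟨MvPolynomial.X v, by simp⟩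

lemma add {f g : (V → ℝ) → ℝ} (hf : PolyFun f) (hg : PolyFun g) :
    PolyFun fun x => f x + g x := by
  obtain ⟨p, hp⟩ := hf; obtain ⟨q, hq⟩ := hg
  exact ⟨p + q, fun x => by simp [hp, hq]⟩

lemma mul {f g : (V → ℝ) → ℝ} (hf : PolyFun f) (hg : PolyFun g) :
    PolyFun fun x => f x * g x := by
  obtain ⟨p, hp⟩ := hf; obtain ⟨q, hq⟩ := hg
  exact ⟨p * q, fun x => by simp [hp, hq]⟩

lemma neg {f : (V → ℝ) → ℝ} (hf : PolyFun f) : PolyFun fun x => -f x := by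
  obtain ⟨p, hp⟩ := hf
  exact ⟨-p, fun x => by simp [hp]⟩

lemma sub {f g : (V → ℝ) → ℝ} (hf : PolyFun f) (hg : PolyFun g) :
    PolyFun fun x => f x - g x := by
  simpa [sub_eq_add_neg] using hf.add hg.neg

lemma sum {ι : Type*} (s : Finset ι) (f : ι → (V → ℝ) → ℝ)
    (h : ∀ i ∈ s, PolyFun (f i)) : PolyFun fun x => ∑ i ∈ s, f i x := by
  classical
  induction s using Finset.cons_induction with
  | empty => simpa using const 0
  | cons a s ha ih =>
    simp only [Finset.sum_cons]
    exact (h a (Finset.mem_cons_self a s)).add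
      (ih fun i hi => h i (Finset.mem_cons_of_mem hi))

end PolyFun

structure QPolyFun (f : (V → ℝ) → ℍ[ℝ]) : Prop where
  hre : PolyFun fun x => (f x).re
  himI : PolyFun fun x => (f x).imI
  himJ : PolyFun fun x => (f x).imJ
  himK : PolyFun fun x => (f x).imK

namespace QPolyFun

lemma add {f g : (V → ℝ) → ℍ[ℝ]} (hf : QPolyFun f) (hg : QPolyFun g) :
    QPolyFun fun x => f x + g x := by
  refine ⟨?_, ?_, ?_, ?_⟩ <;> simp only [Quaternion.re_add, Quaternion.imI_add,
    Quaternion.imJ_add, Quaternion.imK_add]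
  exacts [hf.hre.add hg.hre, hf.himI.add hg.himI, hf.himJ.add hg.himJ, hf.himK.add hg.himK]

lemma mul {f g : (V → ℝ) → ℍ[ℝ]} (hf : QPolyFun f) (hg : QPolyFun g) :
    QPolyFun fun x => f x * g x := by
  obtain ⟨a0, a1, a2, a3⟩ := hf; obtain ⟨b0, b1, b2, b3⟩ := hg
  refine ⟨?_, ?_, ?_, ?_⟩
  · simp only [Quaternion.re_mul]
    exact ((((a0.mul b0).sub (a1.mul b1)).sub (a2.mul b2)).sub (a3.mul b3))
  · simp only [Quaternion.imI_mul]
    exact (((a0.mul b1).add (a1.mul b0)).add (a2.mul b3)).sub (a3.mul b2)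
  · simp only [Quaternion.imJ_mul]
    exact (((a0.mul b2).sub (a1.mul b3)).add (a2.mul b0)).add (a3.mul b1)
  · simp only [Quaternion.imK_mul]
    exact (((a0.mul b3).add (a1.mul b2)).sub (a2.mul b1)).add (a3.mul b0)

lemma star' {f : (V → ℝ) → ℍ[ℝ]} (hf : QPolyFun f) :
    QPolyFun fun x => star (f x) := by
  obtain ⟨a0, a1, a2, a3⟩ := hf
  refine ⟨?_, ?_, ?_, ?_⟩ <;> simp only [Quaternion.re_star, Quaternion.imI_star,
    Quaternion.imJ_star, Quaternion.imK_star]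
  exacts [a0, a1.neg, a2.neg, a3.neg]

lemma sum {ι : Type*} (s : Finset ι) (f : ι → (V → ℝ) → ℍ[ℝ])
    (h : ∀ i ∈ s, QPolyFun (f i)) : QPolyFun fun x => ∑ i ∈ s, f i x := by
  refine ⟨?_, ?_, ?_, ?_⟩
  · have := PolyFun.sum s (fun i x => (f i x).re) (fun i hi => (h i hi).hre)
    simpa [re_sum] using this
  · have := PolyFun.sum s (fun i x => (f i x).imI) (fun i hi => (h i hi).himI)
    simpa [imI_sum] using this
  · have := PolyFun.sum s (fun i x => (f i x).imJ) (fun i hi => (h i hi).himJ)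
    simpa [imJ_sum] using this
  · have := PolyFun.sum s (fun i x => (f i x).imK) (fun i hi => (h i hi).himK)
    simpa [imK_sum] using this

lemma qcomp' {f : (V → ℝ) → ℍ[ℝ]} (hf : QPolyFun f) (a : Fin 4) :
    PolyFun fun x => qcomp (f x) a := by
  fin_cases a <;> simp only [qcomp, Matrix.cons_val_zero, Matrix.cons_val_one, Matrix.head_cons,
    Fin.mk_one, Matrix.cons_val_two, Matrix.tail_cons, Matrix.cons_val_three]
  exacts [hf.hre, hf.himI, hf.himJ, hf.himK]

end QPolyFun
end PolyFun

section Main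
open MvPolynomial

lemma eval_bind1 {σ τ : Type*} (x : τ → ℝ) (g : σ → MvPolynomial τ ℝ)
    (φ : MvPolynomial σ ℝ) :
    eval x (bind₁ g φ) = eval (fun i => eval x (g i)) φ :=
  eval₂Hom_bind₁ _ _ _ _

variable {n : ℕ}

abbrev Vars (n : ℕ) := (Fin n × Fin n × Fin 4) ⊕ (Fin n × Fin n × Fin 4)

def matB (x : Vars n → ℝ) : Matrix (Fin n) (Fin n) ℍ[ℝ] :=
  Matrix.of fun i j => ⟨x (.inl (i,j,0)), x (.inl (i,j,1)), x (.inl (i,j,2)), x (.inl (i,j,3))⟩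

def matC (x : Vars n → ℝ) : Matrix (Fin n) (Fin n) ℍ[ℝ] :=
  Matrix.of fun i j => ⟨x (.inr (i,j,0)), x (.inr (i,j,1)), x (.inr (i,j,2)), x (.inr (i,j,3))⟩

def matG (x : Vars n → ℝ) : Matrix (Fin n) (Fin n) ℍ[ℝ] := matB x + (matB x)ᴴ

lemma matG_isHermitian (x : Vars n → ℝ) : (matG x).IsHermitian := by
  unfold matG
  rw [Matrix.IsHermitian, Matrix.conjTranspose_add, Matrix.conjTranspose_conjTranspose, add_comm]

lemma qpoly_matB (i j : Fin n) : QPolyFun fun x : Vars n → ℝ => matB x i j :=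
  ⟨PolyFun.coord _, PolyFun.coord _, PolyFun.coord _, PolyFun.coord _⟩

lemma qpoly_matC (i j : Fin n) : QPolyFun fun x : Vars n → ℝ => matC x i j :=
  ⟨PolyFun.coord _, PolyFun.coord _, PolyFun.coord _, PolyFun.coord _⟩

lemma qpoly_matG (i j : Fin n) : QPolyFun fun x : Vars n → ℝ => matG x i j := by
  have : (fun x : Vars n → ℝ => matG x i j)
      = fun x => matB x i j + star (matB x j i) := by
    funext x; simp [matG, Matrix.conjTranspose_apply]
  rw [this]
  exact (qpoly_matB i j).add (qpoly_matB j i).star'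

lemma qpoly_conj_entry (M : (Vars n → ℝ) → Matrix (Fin n) (Fin n) ℍ[ℝ])
    (hM : ∀ i j, QPolyFun fun x => M x i j) (i j : Fin n) :
    QPolyFun fun x : Vars n → ℝ => ((matC x)ᴴ * M x * matC x) i j := by
  have : (fun x : Vars n → ℝ => ((matC x)ᴴ * M x * matC x) i j)
      = fun x => ∑ k, (∑ l, star (matC x l i) * M x l k) * matC x k j := by
    funext x
    rw [Matrix.mul_apply]
    refine Finset.sum_congr rfl fun k _ => ?_
    rw [Matrix.mul_apply]
    simp [Matrix.conjTranspose_apply]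
  rw [this]
  refine QPolyFun.sum _ _ fun k _ => ?_
  refine QPolyFun.mul ?_ (qpoly_matC k j)
  exact QPolyFun.sum _ _ fun l _ => ((qpoly_matC l i).star').mul (hM l k)

lemma poly_P_comp {P : Matrix (Fin n) (Fin n) ℍ[ℝ] → ℝ}
    (p : MvPolynomial (Fin n × Fin n × Fin 4) ℝ)
    (hp : ∀ A : Matrix (Fin n) (Fin n) ℍ[ℝ], A.IsHermitian → P A = eval (coords A) p)
    (F : (Vars n → ℝ) → Matrix (Fin n) (Fin n) ℍ[ℝ])
    (hFh : ∀ x, (F x).IsHermitian)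
    (hF : ∀ i j, QPolyFun fun x => F x i j) :
    ∃ q : MvPolynomial (Vars n) ℝ, ∀ x, P (F x) = eval x q := by
  have hc : ∀ t : Fin n × Fin n × Fin 4,
      ∃ qt : MvPolynomial (Vars n) ℝ, ∀ x, coords (F x) t = eval x qt := by
    rintro ⟨i, j, a⟩
    exact (hF i j).qcomp' a
  choose g hg using hc
  refine ⟨bind₁ g p, fun x => ?_⟩
  rw [hp _ (hFh x), eval_bind1]
  have : coords (F x) = fun i => eval x (g i) := funext fun t => hg t x
  rw [this]

end Main

section Main2
open MvPolynomial
variable {n : ℕ}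

lemma qpoly_const (q : ℍ[ℝ]) : QPolyFun fun _ : Vars n → ℝ => q :=
  ⟨PolyFun.const _, PolyFun.const _, PolyFun.const _, PolyFun.const _⟩

lemma matC_elim (b : Fin n × Fin n × Fin 4 → ℝ) (C : Matrix (Fin n) (Fin n) ℍ[ℝ]) :
    matC (Sum.elim b (coords C)) = C := by
  apply Matrix.ext; intro i j
  show (⟨coords C (i,j,0), coords C (i,j,1), coords C (i,j,2), coords C (i,j,3)⟩ : ℍ[ℝ]) = C i j
  simp [coords, qcomp]
  rfl

def halfCoords (A : Matrix (Fin n) (Fin n) ℍ[ℝ]) : Fin n × Fin n × Fin 4 → ℝ :=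
  fun t => coords A t / 2

lemma matG_elim (A : Matrix (Fin n) (Fin n) ℍ[ℝ]) (hA : A.IsHermitian)
    (c : Fin n × Fin n × Fin 4 → ℝ) : matG (Sum.elim (halfCoords A) c) = A := by
  apply Matrix.ext; intro i j
  have hji : A j i = star (A i j) := by
    have h := hA.apply i j
    rw [← h, star_star]
  show matB _ i j + star (matB _ j i) = A i j
  show (⟨halfCoords A (i,j,0), halfCoords A (i,j,1), halfCoords A (i,j,2), halfCoords A (i,j,3)⟩
      : ℍ[ℝ]) + star (⟨halfCoords A (j,i,0), halfCoords A (j,i,1), halfCoords A (j,i,2),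
      halfCoords A (j,i,3)⟩ : ℍ[ℝ]) = A i j
  simp only [halfCoords, coords, qcomp, hji]
  ext <;> simp [Quaternion.re_star, Quaternion.imI_star, Quaternion.imJ_star,
    Quaternion.imK_star] <;> ring

end Main2


/-- For any hyperhermitian matrix `A` and any quaternionic matrix `C`,
`det(C* A C) = det(A)·det(C* C)` for the Moore determinant. -/
theorem mooreDet_conj {n : ℕ} (P : Matrix (Fin n) (Fin n) ℍ[ℝ] → ℝ) (hP : IsMooreDet n P)
    (A C : Matrix (Fin n) (Fin n) ℍ[ℝ]) (hA : A.IsHermitian) :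
    P (Cᴴ * A * C) = P A * P (Cᴴ * C) := by
  classical
  obtain ⟨⟨p, hpoly⟩, hdet, hone⟩ := hP
  have hPmoore : IsMooreDet n P := ⟨⟨p, hpoly⟩, hdet, hone⟩
  obtain ⟨qL, hqL⟩ := poly_P_comp p hpoly (fun x => (matC x)ᴴ * matG x * matC x)
      (fun x => isHermitian_conjTranspose_mul_mul _ (matG_isHermitian x))
      (fun i j => qpoly_conj_entry matG qpoly_matG i j)
  obtain ⟨qA, hqA⟩ := poly_P_comp p hpoly matG matG_isHermitian qpoly_matG
  obtain ⟨qC, hqC⟩ := poly_P_comp p hpoly (fun x => (matC x)ᴴ * 1 * matC x)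
      (fun x => isHermitian_conjTranspose_mul_mul _ isHermitian_one)
      (fun i j => qpoly_conj_entry (fun _ => 1) (fun _ _ => qpoly_const _) i j)
  have hCC : ∀ x : Vars n → ℝ, (matC x)ᴴ * 1 * matC x = (matC x)ᴴ * matC x := by
    intro x; rw [Matrix.mul_one]
  have hpow : ∀ x : Vars n → ℝ,
      MvPolynomial.eval x (qL ^ 4) = MvPolynomial.eval x ((qA * qC) ^ 4) := by
    intro x
    rw [map_pow, map_pow, _root_.map_mul, ← hqL, ← hqA, ← hqC]
    have h := pointwise_pow hPmoore (matG x) (matC x) (matG_isHermitian x)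
    rw [hCC x]
    exact h
  have hp4 : qL ^ 4 = (qA * qC) ^ 4 := MvPolynomial.funext hpow
  set x₁ : Vars n → ℝ :=
    Sum.elim (halfCoords (1 : Matrix (Fin n) (Fin n) ℍ[ℝ]))
      (coords (1 : Matrix (Fin n) (Fin n) ℍ[ℝ])) with hx₁
  have e1L : MvPolynomial.eval x₁ qL = 1 := by
    rw [← hqL, hx₁, matC_elim, matG_elim _ Matrix.isHermitian_one]
    simp [hone]
  have e1A : MvPolynomial.eval x₁ qA = 1 := by
    rw [← hqA, hx₁, matG_elim _ Matrix.isHermitian_one, hone]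
  have e1C : MvPolynomial.eval x₁ qC = 1 := by
    rw [← hqC, hx₁, matC_elim]
    simp [hone]
  have hfac : (qL - qA * qC) * ((qL + qA * qC) * (qL ^ 2 + (qA * qC) ^ 2)) = 0 := by
    linear_combination hp4
  have hqLeq : qL = qA * qC := by
    rcases mul_eq_zero.mp hfac with h | h
    · exact sub_eq_zero.mp h
    rcases mul_eq_zero.mp h with h | h
    · exfalso
      have := congrArg (MvPolynomial.eval x₁) h
      rw [map_add, _root_.map_mul, e1L, e1A, e1C] at this
      norm_num at this
    · exfalso
      have := congrArg (MvPolynomial.eval x₁) h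
      rw [map_add, map_pow, map_pow, _root_.map_mul, e1L, e1A, e1C] at this
      norm_num at this
  set x₀ : Vars n → ℝ := Sum.elim (halfCoords A) (coords C) with hx₀
  have h0L : MvPolynomial.eval x₀ qL = P (Cᴴ * A * C) := by
    rw [← hqL, hx₀, matC_elim, matG_elim _ hA]
  have h0A : MvPolynomial.eval x₀ qA = P A := by rw [← hqA, hx₀, matG_elim _ hA]
  have h0C : MvPolynomial.eval x₀ qC = P (Cᴴ * C) := by
    rw [← hqC, hx₀, matC_elim, Matrix.mul_one]
  rw [← h0L, ← h0A, ← h0C, hqLeq, _root_.map_mul]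
end
end

section
/- (Quaternionic Sylvester criterion) A hyperhermitian n×n quaternionic matrix A is positive definite if and only if the Moore determinants of all of its leading principal (left upper) minors are positive. -/
open Quaternion Matrix

noncomputable section

/-- The (real-valued) quadratic form `x ↦ Σ conj(x_i) a_{ij} x_j` of a hyperhermitian matrix. -/
def qform {n : ℕ} (A : Matrix (Fin n) (Fin n) ℍ[ℝ]) (x : Fin n → ℍ[ℝ]) : ℍ[ℝ] :=
  ∑ i, ∑ j, star (x i) * A i j * x j

/-- Non-negative definiteness of a hyperhermitian quaternionic matrix. -/
def QPosSemidef {n : ℕ} (A : Matrix (Fin n) (Fin n) ℍ[ℝ]) : Prop :=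
  ∀ x : Fin n → ℍ[ℝ], 0 ≤ (qform A x).re

/-- Positive definiteness of a hyperhermitian quaternionic matrix. -/
def QPosDef {n : ℕ} (A : Matrix (Fin n) (Fin n) ℍ[ℝ]) : Prop :=
  ∀ x : Fin n → ℍ[ℝ], x ≠ 0 → 0 < (qform A x).re

/-! ### Auxiliary lemmas on quaternion components -/

lemma qunit_re (r : Fin 4) : (qunit r).re = if r = 0 then 1 else 0 := by fin_cases r <;> rfl
lemma qunit_imI (r : Fin 4) : (qunit r).imI = if r = 1 then 1 else 0 := by fin_cases r <;> rfl
lemma qunit_imJ (r : Fin 4) : (qunit r).imJ = if r = 2 then 1 else 0 := by fin_cases r <;> rfl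
lemma qunit_imK (r : Fin 4) : (qunit r).imK = if r = 3 then 1 else 0 := by fin_cases r <;> rfl

lemma sum_qcomp_smul_qunit (q : ℍ[ℝ]) : ∑ r, qcomp q r • qunit r = q := by
  simp [Fin.sum_univ_four, qcomp]
  ext <;> simp [qunit_re, qunit_imI, qunit_imJ, qunit_imK]

lemma qcomp_add (q p : ℍ[ℝ]) (r : Fin 4) : qcomp (q + p) r = qcomp q r + qcomp p r := by
  fin_cases r <;> simp [qcomp]

lemma qcomp_real_smul (t : ℝ) (q : ℍ[ℝ]) (r : Fin 4) : qcomp (t • q) r = t * qcomp q r := by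
  fin_cases r <;> simp [qcomp]

lemma qcomp_eq_zero_iff (q : ℍ[ℝ]) : (∀ r, qcomp q r = 0) ↔ q = 0 := by
  constructor
  · intro h; ext
    · simpa [qcomp] using h 0
    · simpa [qcomp] using h 1
    · simpa [qcomp] using h 2
    · simpa [qcomp] using h 3
  · rintro rfl r; fin_cases r <;> simp [qcomp]

lemma qcomp_sum_smul_qunit (v : Fin 4 → ℝ) (s : Fin 4) : qcomp (∑ r, v r • qunit r) s = v s := by
  fin_cases s <;> simp [Fin.sum_univ_four, qcomp, qunit_re, qunit_imI, qunit_imJ, qunit_imK]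

lemma re_star_qunit_mul_qunit (r s : Fin 4) :
    (star (qunit r) * qunit s).re = if r = s then 1 else 0 := by
  fin_cases r <;> fin_cases s <;>
    simp [qunit_re, qunit_imI, qunit_imJ, qunit_imK, Quaternion.re_mul, Quaternion.re_star, Quaternion.imI_star,
      Quaternion.imJ_star, Quaternion.imK_star]

def reHom : ℍ[ℝ] →+ ℝ :=
  { toFun := QuaternionAlgebra.re, map_zero' := rfl, map_add' := fun _ _ => rfl }

lemma re_star_mul_mul (a x y : ℍ[ℝ]) :
    (star x * a * y).re = ∑ r, ∑ s, qcomp x r * ((star (qunit r) * a * qunit s).re * qcomp y s) := by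
  conv_lhs => rw [← sum_qcomp_smul_qunit x, ← sum_qcomp_smul_qunit y]
  simp only [star_sum, Quaternion.star_smul, Finset.sum_mul, Finset.mul_sum,
    smul_mul_assoc, mul_smul_comm, re_sum, Quaternion.re_smul, smul_eq_mul]
  rw [Finset.sum_comm]
  refine Finset.sum_congr rfl fun r _ => Finset.sum_congr rfl fun s _ => by ring

/-! ### The realization of vectors and the quadratic form -/

variable {n : ℕ}

def rvec (x : Fin n → ℍ[ℝ]) : Fin n × Fin 4 → ℝ := fun p => qcomp (x p.1) p.2

lemma qform_re (A : Matrix (Fin n) (Fin n) ℍ[ℝ]) (x : Fin n → ℍ[ℝ]) :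
    (qform A x).re = rvec x ⬝ᵥ (realMat A) *ᵥ rvec x := by
  rw [qform, re_sum, dotProduct, Fintype.sum_prod_type]
  refine Finset.sum_congr rfl fun i _ => ?_
  rw [re_sum]
  have : ∀ r : Fin 4, rvec x (i, r) * ((realMat A) *ᵥ rvec x) (i, r)
      = ∑ j, ∑ s, qcomp (x i) r * ((star (qunit r) * A i j * qunit s).re * qcomp (x j) s) := by
    intro r
    rw [mulVec, dotProduct, Fintype.sum_prod_type, Finset.mul_sum]
    refine Finset.sum_congr rfl fun j _ => ?_
    rw [Finset.mul_sum]
    rfl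
  rw [Finset.sum_congr rfl fun r _ => this r, Finset.sum_comm]
  exact Finset.sum_congr rfl fun j _ => (re_star_mul_mul _ _ _)

lemma rvec_eq_zero_iff (x : Fin n → ℍ[ℝ]) : rvec x = 0 ↔ x = 0 := by
  constructor
  · intro h; funext i
    exact (qcomp_eq_zero_iff _).1 fun r => congrFun h (i, r)
  · rintro rfl; funext p
    have := (qcomp_eq_zero_iff (0 : ℍ[ℝ])).2 rfl
    simpa [rvec] using this p.2

lemma realMat_isHermitian {A : Matrix (Fin n) (Fin n) ℍ[ℝ]} (hA : A.IsHermitian) :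
    (realMat A).IsHermitian := by
  refine Matrix.IsHermitian.ext fun p q => ?_
  simp only [realMat, Matrix.of_apply, star_trivial]
  have h1 : A q.1 p.1 = star (A p.1 q.1) := (hA.apply q.1 p.1).symm
  rw [h1, show star (qunit q.2) * star (A p.1 q.1) * qunit p.2
      = star (star (qunit p.2) * A p.1 q.1 * qunit q.2) by simp [StarMul.star_mul, mul_assoc]]
  exact (Quaternion.re_star _)

lemma qposdef_iff_posDef {A : Matrix (Fin n) (Fin n) ℍ[ℝ]} (hA : A.IsHermitian) :
    QPosDef A ↔ (realMat A).PosDef := by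
  constructor
  · intro h
    refine Matrix.posDef_iff_dotProduct_mulVec.2 ⟨realMat_isHermitian hA, fun v hv => ?_⟩
    set x : Fin n → ℍ[ℝ] := fun i => ∑ r, v (i, r) • qunit r with hxdef
    have hrv : rvec x = v := by
      funext p
      simpa [rvec, hxdef] using qcomp_sum_smul_qunit (fun r => v (p.1, r)) p.2
    have hx : x ≠ 0 := by
      intro h0
      exact hv (by rw [← hrv, h0, (rvec_eq_zero_iff 0).2 rfl])
    have := h x hx
    rw [qform_re, hrv] at this
    simpa using this
  · intro h x hx
    rw [qform_re]
    have := (Matrix.posDef_iff_dotProduct_mulVec.1 h).2 (x := rvec x) (fun h0 => hx ((rvec_eq_zero_iff x).1 h0))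
    simpa using this

/-! ### Linearity lemmas -/

lemma realMat_add (A B : Matrix (Fin n) (Fin n) ℍ[ℝ]) :
    realMat (A + B) = realMat A + realMat B := by
  ext p q
  simp [realMat, mul_add, add_mul]

lemma realMat_smul (t : ℝ) (A : Matrix (Fin n) (Fin n) ℍ[ℝ]) :
    realMat (t • A) = t • realMat A := by
  ext p q
  simp [realMat, mul_smul_comm, smul_mul_assoc, Quaternion.re_smul]

lemma coords_add (A B : Matrix (Fin n) (Fin n) ℍ[ℝ]) (v : Fin n × Fin n × Fin 4) :
    coords (A + B) v = coords A v + coords B v := by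
  simp [coords, qcomp_add]

lemma coords_smul (t : ℝ) (A : Matrix (Fin n) (Fin n) ℍ[ℝ]) (v : Fin n × Fin n × Fin 4) :
    coords (t • A) v = t * coords A v := by
  simp [coords, qcomp_real_smul]

lemma isHermitian_real_smul {A : Matrix (Fin n) (Fin n) ℍ[ℝ]} (hA : A.IsHermitian) (t : ℝ) :
    (t • A).IsHermitian := by
  refine Matrix.IsHermitian.ext fun i j => ?_
  simp only [Matrix.smul_apply, Quaternion.star_smul]
  rw [hA.apply i j]

lemma qform_comb (a b : ℝ) (A B : Matrix (Fin n) (Fin n) ℍ[ℝ]) (x : Fin n → ℍ[ℝ]) :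
    (qform (a • A + b • B) x).re = a * (qform A x).re + b * (qform B x).re := by
  simp only [qform, re_sum, Matrix.add_apply, Matrix.smul_apply, mul_add, add_mul,
    mul_smul_comm, smul_mul_assoc, Quaternion.re_add, Quaternion.re_smul, smul_eq_mul,
    Finset.sum_add_distrib, Finset.mul_sum]

lemma qposdef_one : QPosDef (1 : Matrix (Fin n) (Fin n) ℍ[ℝ]) := by
  intro x hx
  have h1 : qform 1 x = ∑ i, star (x i) * x i := by
    rw [qform]
    refine Finset.sum_congr rfl fun i _ => ?_
    rw [Finset.sum_eq_single i]
    · simp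
    · intro j _ hj
      simp [Matrix.one_apply_ne' hj]
    · simp
  obtain ⟨i, hi⟩ := Function.ne_iff.1 hx
  rw [h1, re_sum]
  refine Finset.sum_pos' (fun j _ => ?_) ⟨i, Finset.mem_univ i, ?_⟩
  · rw [show star (x j) * x j = ((normSq (x j) : ℝ) : ℍ[ℝ]) by rw [Quaternion.star_mul_self]]
    simpa using normSq_nonneg (x := x j)
  · rw [show star (x i) * x i = ((normSq (x i) : ℝ) : ℍ[ℝ]) by rw [Quaternion.star_mul_self]]
    have : (0:ℝ) < normSq (x i) :=
      lt_of_le_of_ne normSq_nonneg (Ne.symm (normSq_ne_zero.2 hi))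
    simpa using this

/-! ### Positivity of the Moore determinant on positive definite matrices -/

lemma P_pos_of_qposdef {P : Matrix (Fin n) (Fin n) ℍ[ℝ] → ℝ} (hP : IsMooreDet n P)
    {A : Matrix (Fin n) (Fin n) ℍ[ℝ]} (hA : A.IsHermitian) (hpos : QPosDef A) : 0 < P A := by
  obtain ⟨⟨p, hp⟩, hdet, hone⟩ := hP
  set M : ℝ → Matrix (Fin n) (Fin n) ℍ[ℝ] := fun t => (1 - t) • 1 + t • A with hM
  have hMherm : ∀ t, (M t).IsHermitian :=
    fun t => (isHermitian_real_smul Matrix.isHermitian_one _).add (isHermitian_real_smul hA t)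
  have hMpos : ∀ t ∈ Set.Icc (0:ℝ) 1, QPosDef (M t) := by
    rintro t ⟨ht0, ht1⟩ x hx
    rw [hM, qform_comb]
    have h1 := qposdef_one x hx
    have h2 := hpos x hx
    rcases eq_or_lt_of_le ht1 with rfl | ht1'
    · simpa using h2
    · nlinarith
  set f : ℝ → ℝ := fun t => MvPolynomial.eval (coords (M t)) p with hf
  have hfM : ∀ t, f t = P (M t) := fun t => (hp (M t) (hMherm t)).symm
  have hfc : Continuous f := by
    have : f = (fun c => MvPolynomial.eval c p) ∘ (fun t => coords (M t)) := rfl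
    rw [this]
    refine (MvPolynomial.continuous_eval p).comp ?_
    refine continuous_pi fun v => ?_
    have : (fun t => coords (M t) v) = fun t => (1 - t) * coords 1 v + t * coords A v := by
      funext t
      rw [hM]
      simp [coords_add, coords_smul]
    rw [this]
    fun_prop
  have hfne : ∀ t ∈ Set.Icc (0:ℝ) 1, f t ≠ 0 := by
    intro t ht h0
    have hd := hdet (M t) (hMherm t)
    have hpd : (realMat (M t)).PosDef := (qposdef_iff_posDef (hMherm t)).1 (hMpos t ht)
    have hpos4 : 0 < P (M t) ^ 4 := by rw [← hd]; exact hpd.det_pos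
    rw [hfM t] at h0
    rw [h0] at hpos4
    simp at hpos4
  have hf0 : f 0 = 1 := by
    have : M 0 = 1 := by simp [hM]
    rw [hfM 0, this, hone]
  have hf1 : f 1 = P A := by
    have : M 1 = A := by simp [hM]
    rw [hfM 1, this]
  by_contra hle
  push_neg at hle
  have h1ne : f 1 ≠ 0 := hfne 1 ⟨zero_le_one, le_refl 1⟩
  have hlt : f 1 < 0 := lt_of_le_of_ne (hf1 ▸ hle) h1ne
  have := intermediate_value_Icc' (zero_le_one (α := ℝ)) hfc.continuousOn
  have h0mem : (0:ℝ) ∈ Set.Icc (f 1) (f 0) := ⟨le_of_lt hlt, by rw [hf0]; exact zero_le_one⟩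
  obtain ⟨t, ht, hft⟩ := this h0mem
  exact hfne t ht hft

/-! ### Submatrices -/

lemma isHermitian_submatrix {α : Type*} [Star α] {m : ℕ} {A : Matrix (Fin n) (Fin n) α}
    (hA : A.IsHermitian) (f : Fin m → Fin n) : (A.submatrix f f).IsHermitian := by
  refine Matrix.IsHermitian.ext fun i j => ?_
  simpa using hA.apply (f i) (f j)

lemma sum_castLE {M : Type*} [AddCommMonoid M] {m : ℕ} (h : m ≤ n) (g : Fin n → M)
    (hg : ∀ i : Fin n, ¬((i : ℕ) < m) → g i = 0) :
    ∑ i, g i = ∑ i : Fin m, g (Fin.castLE h i) := by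
  classical
  let emb : Fin m ↪ Fin n := ⟨Fin.castLE h, Fin.castLE_injective h⟩
  have h1 : ∑ i ∈ Finset.univ.map emb, g i = ∑ i : Fin m, g (Fin.castLE h i) :=
    Finset.sum_map Finset.univ emb g
  rw [← h1]
  refine (Finset.sum_subset (Finset.subset_univ _) ?_).symm
  intro i _ hi
  refine hg i fun hlt => hi ?_
  refine Finset.mem_map.2 ⟨⟨(i : ℕ), hlt⟩, Finset.mem_univ _, ?_⟩
  exact Fin.ext rfl

lemma qposdef_submatrix {A : Matrix (Fin n) (Fin n) ℍ[ℝ]} (hpos : QPosDef A)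
    {m : ℕ} (h : m ≤ n) : QPosDef (A.submatrix (Fin.castLE h) (Fin.castLE h)) := by
  intro x hx
  set y : Fin n → ℍ[ℝ] := fun i => if hi : (i : ℕ) < m then x ⟨(i : ℕ), hi⟩ else 0 with hy
  have hyc : ∀ i : Fin m, y (Fin.castLE h i) = x i := by
    intro i
    simp [hy, i.isLt]
  have hy0 : ∀ i : Fin n, ¬((i : ℕ) < m) → y i = 0 := by
    intro i hi; simp [hy, hi]
  have hyne : y ≠ 0 := by
    obtain ⟨i, hi⟩ := Function.ne_iff.1 hx
    exact Function.ne_iff.2 ⟨Fin.castLE h i, by rw [hyc i]; simpa using hi⟩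
  have hq : qform (A.submatrix (Fin.castLE h) (Fin.castLE h)) x = qform A y := by
    rw [qform, qform]
    rw [sum_castLE h _ (fun i hi => by
      simp only [hy0 i hi, star_zero, zero_mul, Finset.sum_const_zero])]
    refine Finset.sum_congr rfl fun i _ => ?_
    rw [sum_castLE h _ (fun j hj => by simp [hy0 j hj])]
    refine Finset.sum_congr rfl fun j _ => ?_
    rw [hyc i, hyc j]
    rfl
  rw [hq]
  exact hpos y hyne

/-! ### Generic real-matrix lemmas -/

lemma posDef_of_posSemidef_det {m : Type*} [Fintype m] [DecidableEq m]
    {M : Matrix m m ℝ} (h : M.PosSemidef) (hdet : M.det ≠ 0) : M.PosDef := by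
  refine Matrix.posDef_iff_dotProduct_mulVec.2 ⟨h.1, fun x hx => ?_⟩
  rcases ((Matrix.posSemidef_iff_dotProduct_mulVec.1 h).2 x).lt_or_eq with hlt | heq
  · exact hlt
  · exfalso
    have hz : M *ᵥ x = 0 := (h.dotProduct_mulVec_zero_iff x).1 heq.symm
    exact hdet ((Matrix.exists_mulVec_eq_zero_iff).1 ⟨x, hx, hz⟩)

lemma posDef_add_smul_one {m : Type*} [Fintype m] [DecidableEq m] {S : Matrix m m ℝ}
    (hS : S.IsHermitian) {t : ℝ} (ht : (∑ i, ∑ j, |S i j|) + 1 ≤ t) : (S + t • 1).PosDef := by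
  set C := ∑ i, ∑ j, |S i j| with hC
  have hsmul : ((t • 1 : Matrix m m ℝ)).IsHermitian := by
    refine Matrix.IsHermitian.ext fun i j => ?_
    simp [Matrix.one_apply, eq_comm]
  refine Matrix.posDef_iff_dotProduct_mulVec.2 ⟨hS.add hsmul, fun x hx => ?_⟩
  have hxx : 0 < x ⬝ᵥ x := by
    obtain ⟨i, hi⟩ := Function.ne_iff.1 hx
    refine Finset.sum_pos' (fun j _ => mul_self_nonneg _) ⟨i, Finset.mem_univ i, ?_⟩
    exact mul_self_pos.2 (by simpa using hi)
  have hsq : ∀ i, x i * x i ≤ x ⬝ᵥ x :=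
    fun i => Finset.single_le_sum (fun j _ => mul_self_nonneg (x j)) (Finset.mem_univ i)
  have hb : |x ⬝ᵥ S *ᵥ x| ≤ C * (x ⬝ᵥ x) := by
    have h1 : x ⬝ᵥ S *ᵥ x = ∑ i, ∑ j, x i * (S i j * x j) := by
      rw [dotProduct]
      exact Finset.sum_congr rfl fun i _ => by rw [mulVec, dotProduct, Finset.mul_sum]
    rw [h1, hC, Finset.sum_mul]
    refine (Finset.abs_sum_le_sum_abs _ _).trans (Finset.sum_le_sum fun i _ => ?_)
    rw [Finset.sum_mul]
    refine (Finset.abs_sum_le_sum_abs _ _).trans (Finset.sum_le_sum fun j _ => ?_)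
    have h2 : |x i * (S i j * x j)| = |S i j| * (|x i| * |x j|) := by
      rw [abs_mul, abs_mul]; ring
    rw [h2]
    refine mul_le_mul_of_nonneg_left ?_ (abs_nonneg _)
    nlinarith [sq_nonneg (|x i| - |x j|), sq_abs (x i), sq_abs (x j), hsq i, hsq j]
  have hCnn : 0 ≤ C := Finset.sum_nonneg fun i _ => Finset.sum_nonneg fun j _ => abs_nonneg _
  have hval : star x ⬝ᵥ (S + t • 1) *ᵥ x = x ⬝ᵥ S *ᵥ x + t * (x ⬝ᵥ x) := by
    rw [star_trivial, add_mulVec, dotProduct_add]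
    congr 1
    rw [smul_mulVec, one_mulVec, dotProduct_smul, smul_eq_mul]
  rw [hval]
  have := abs_le.1 hb
  nlinarith [this.1]

/-! ### The backward induction -/

lemma stdBasis_herm : (Matrix.single (Fin.last n) (Fin.last n) (1 : ℍ[ℝ])).IsHermitian := by
  refine Matrix.IsHermitian.ext fun i j => ?_
  simp only [Matrix.single, Matrix.of_apply, apply_ite (star : ℍ[ℝ] → ℍ[ℝ]),
    star_one, star_zero]
  by_cases h1 : Fin.last n = i <;> by_cases h2 : Fin.last n = j <;> simp [h1, h2]

lemma qposdef_backward (P : ∀ k, Matrix (Fin k) (Fin k) ℍ[ℝ] → ℝ)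
    (hP : ∀ k, IsMooreDet k (P k)) :
    ∀ n (A : Matrix (Fin n) (Fin n) ℍ[ℝ]), A.IsHermitian →
      (∀ (k : ℕ) (h : k + 1 ≤ n), 0 < P (k + 1) (A.submatrix (Fin.castLE h) (Fin.castLE h))) →
      QPosDef A := by
  intro n
  induction n with
  | zero =>
      intro A _ _ x hx
      exact absurd (funext fun i => i.elim0) hx
  | succ n IH =>
      intro A hA hminors
      classical
      have h' : n ≤ n + 1 := Nat.le_succ n
      set A' := A.submatrix (Fin.castLE h') (Fin.castLE h') with hA'def
      have hA'h : A'.IsHermitian := isHermitian_submatrix hA _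
      have hA'minors : ∀ (k : ℕ) (h : k + 1 ≤ n),
          0 < P (k + 1) (A'.submatrix (Fin.castLE h) (Fin.castLE h)) := by
        intro k h
        have heq : A'.submatrix (Fin.castLE h) (Fin.castLE h)
            = A.submatrix (Fin.castLE (h.trans h')) (Fin.castLE (h.trans h')) := by
          rw [hA'def, Matrix.submatrix_submatrix]
          rfl
        rw [heq]
        exact hminors k (h.trans h')
      have hA'pos : QPosDef A' := IH A' hA'h hA'minors
      have hM' : (realMat A').PosDef := (qposdef_iff_posDef hA'h).1 hA'pos
      haveI : Invertible (realMat A') :=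
        Matrix.invertibleOfIsUnitDet _ (isUnit_iff_ne_zero.2 (ne_of_gt hM'.det_pos))
      have hRA : ∀ p q, realMat A p q = realMat A q p := by
        intro p q
        have := (realMat_isHermitian hA).apply q p
        simpa using this
      -- the index equivalence
      set E : (Fin n × Fin 4) ⊕ (Fin 1 × Fin 4) ≃ Fin (n + 1) × Fin 4 :=
        { toFun := fun p => Sum.elim (fun q => (Fin.castLE h' q.1, q.2))
            (fun q => (Fin.last n, q.2)) p
          invFun := fun p => if hp : (p.1 : ℕ) < n then Sum.inl (⟨(p.1 : ℕ), hp⟩, p.2)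
            else Sum.inr (0, p.2)
          left_inv := by
            rintro (⟨q, r⟩ | ⟨z, r⟩)
            · simp
            · have : ¬((Fin.last n : Fin (n + 1)) : ℕ) < n := by simp
              simp [this, Subsingleton.elim (0 : Fin 1) z]
          right_inv := by
            rintro ⟨i, r⟩
            by_cases hi : (i : ℕ) < n
            · simp only [dif_pos hi, Sum.elim_inl]
              exact Prod.ext (Fin.ext rfl) rfl
            · simp only [dif_neg hi, Sum.elim_inr]
              refine Prod.ext (Fin.ext ?_) rfl
              have := i.isLt
              simp only [Fin.val_last]
              omega } with hEdef
      set Bm : Matrix (Fin n × Fin 4) (Fin 1 × Fin 4) ℝ :=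
        Matrix.of fun p q => realMat A (Fin.castLE h' p.1, p.2) (Fin.last n, q.2) with hBmdef
      set Dm : Matrix (Fin 1 × Fin 4) (Fin 1 × Fin 4) ℝ :=
        Matrix.of fun p q => realMat A (Fin.last n, p.2) (Fin.last n, q.2) with hDmdef
      set E₀ := Matrix.single (Fin.last n) (Fin.last n) (1 : ℍ[ℝ]) with hE0def
      set At : ℝ → Matrix (Fin (n + 1)) (Fin (n + 1)) ℍ[ℝ] := fun t => A + t • E₀ with hAtdef
      have hAt_herm : ∀ t, (At t).IsHermitian :=
        fun t => hA.add (isHermitian_real_smul stdBasis_herm t)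
      have hE0entry : ∀ (p q : Fin (n + 1) × Fin 4), realMat E₀ p q =
          if p.1 = Fin.last n ∧ q.1 = Fin.last n then (if p.2 = q.2 then (1:ℝ) else 0) else 0 := by
        rintro ⟨i, r⟩ ⟨j, s⟩
        show (star (qunit r) * E₀ i j * qunit s).re = _
        rw [hE0def]
        by_cases h1 : i = Fin.last n <;> by_cases h2 : j = Fin.last n
        · subst h1; subst h2
          rw [Matrix.single_apply_same, mul_one, re_star_qunit_mul_qunit]
          simp
        · rw [Matrix.single_apply_of_ne _ _ _ _ _ (fun hc => h2 hc.2.symm)]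
          simp [h2]
        · rw [Matrix.single_apply_of_ne _ _ _ _ _ (fun hc => h1 hc.1.symm)]
          simp [h1]
        · rw [Matrix.single_apply_of_ne _ _ _ _ _ (fun hc => h1 hc.1.symm)]
          simp [h1]
      have key : ∀ t : ℝ, (realMat (At t)).submatrix E E
          = Matrix.fromBlocks (realMat A') Bm Bmᴴ (Dm + t • 1) := by
        intro t
        have hsplit : realMat (At t) = realMat A + t • realMat E₀ := by
          rw [hAtdef]
          rw [realMat_add, realMat_smul]
        ext p q
        rcases p with ⟨i, r⟩ | ⟨z, r⟩ <;> rcases q with ⟨j, s⟩ | ⟨w, s⟩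
        · -- top-left block
          have hne : ¬(Fin.castLE h' i = Fin.last n) := by
            intro hcontra
            have h9 : (i : ℕ) = n := by simpa [Fin.ext_iff] using hcontra
            have := i.isLt
            omega
          rw [Matrix.submatrix_apply, hsplit, Matrix.add_apply, Matrix.smul_apply]
          have hEl : E (Sum.inl ((i : Fin n), (r : Fin 4))) = (Fin.castLE h' i, r) := rfl
          rw [hEl, hE0entry]
          simp only [smul_eq_mul, Matrix.fromBlocks_apply₁₁, hne, false_and, if_false,
            mul_zero, add_zero]
          rfl
        · -- top-right block
          have hne : ¬(Fin.castLE h' i = Fin.last n) := by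
            intro hcontra
            have h9 : (i : ℕ) = n := by simpa [Fin.ext_iff] using hcontra
            have := i.isLt
            omega
          rw [Matrix.submatrix_apply, hsplit, Matrix.add_apply, Matrix.smul_apply]
          have hEl : E (Sum.inl ((i : Fin n), (r : Fin 4))) = (Fin.castLE h' i, r) := rfl
          have hEr : E (Sum.inr ((w : Fin 1), (s : Fin 4))) = (Fin.last n, s) := rfl
          rw [hEl, hEr, hE0entry]
          simp only [smul_eq_mul, Matrix.fromBlocks_apply₁₂, hne, false_and, if_false,
            mul_zero, add_zero]
          rfl
        · -- bottom-left block
          have hne : ¬(Fin.castLE h' j = Fin.last n) := by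
            intro hcontra
            have h9 : (j : ℕ) = n := by simpa [Fin.ext_iff] using hcontra
            have := j.isLt
            omega
          rw [Matrix.submatrix_apply, hsplit, Matrix.add_apply, Matrix.smul_apply]
          have hEl : E (Sum.inl ((j : Fin n), (s : Fin 4))) = (Fin.castLE h' j, s) := rfl
          have hEr : E (Sum.inr ((z : Fin 1), (r : Fin 4))) = (Fin.last n, r) := rfl
          rw [hEl, hEr, hE0entry]
          simp only [smul_eq_mul, Matrix.fromBlocks_apply₂₁, hne, and_false, if_false,
            mul_zero, add_zero, Matrix.conjTranspose_apply, star_trivial]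
          rw [show Bm ((j : Fin n), (s : Fin 4)) ((z : Fin 1), (r : Fin 4))
              = realMat A (Fin.castLE h' j, s) (Fin.last n, r) from rfl]
          exact hRA _ _
        · -- bottom-right block
          rw [Matrix.submatrix_apply, hsplit, Matrix.add_apply, Matrix.smul_apply]
          have hEr1 : E (Sum.inr ((z : Fin 1), (r : Fin 4))) = (Fin.last n, r) := rfl
          have hEr2 : E (Sum.inr ((w : Fin 1), (s : Fin 4))) = (Fin.last n, s) := rfl
          rw [hEr1, hEr2, hE0entry]
          simp only [smul_eq_mul, Matrix.fromBlocks_apply₂₂, and_self, if_true,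
            Matrix.add_apply, Matrix.smul_apply]
          have hzw : z = w := Subsingleton.elim z w
          subst hzw
          rw [show Dm ((z : Fin 1), (r : Fin 4)) ((z : Fin 1), (s : Fin 4))
              = realMat A (Fin.last n, r) (Fin.last n, s) from rfl]
          simp [Matrix.one_apply, Prod.ext_iff]
      set S : Matrix (Fin 1 × Fin 4) (Fin 1 × Fin 4) ℝ :=
        Dm - Bmᴴ * (realMat A')⁻¹ * Bm with hSdef
      have hshift : ∀ t : ℝ, Dm + t • 1 - Bmᴴ * (realMat A')⁻¹ * Bm = S + t • 1 := by
        intro t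
        rw [hSdef]
        abel
      have hdetM : ∀ t : ℝ, (realMat (At t)).det = (realMat A').det * (S + t • 1).det := by
        intro t
        rw [← Matrix.det_submatrix_equiv_self E, key t, Matrix.det_fromBlocks₁₁]
        rw [invOf_eq_nonsing_inv, hshift t]
      have hsemi : ∀ t : ℝ, (realMat (At t)).PosSemidef ↔ (S + t • 1).PosSemidef := by
        intro t
        rw [← Matrix.posSemidef_submatrix_equiv E, key t,
          Matrix.PosDef.fromBlocks₁₁ Bm (Dm + t • 1) hM', hshift t]
      have hermS : S.IsHermitian := by
        refine Matrix.IsHermitian.sub ?_ (Matrix.isHermitian_conjTranspose_mul_mul Bm hM'.inv.1)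
        refine Matrix.IsHermitian.ext fun p q => ?_
        simp only [hDmdef, Matrix.of_apply, star_trivial]
        exact hRA _ _
      -- the Moore determinant polynomial for size n+1
      obtain ⟨⟨p, hp⟩, hdet, hone⟩ := hP (n + 1)
      have hcoordsAt : ∀ (t : ℝ) v, coords (At t) v = coords A v + coords E₀ v * t := by
        intro t v
        rw [hAtdef]
        rw [coords_add, coords_smul]
        ring
      set F : Polynomial ℝ := MvPolynomial.eval₂ Polynomial.C
        (fun v => Polynomial.C (coords A v) + Polynomial.C (coords E₀ v) * Polynomial.X) p
        with hFdef
      have hFeval : ∀ t : ℝ, F.eval t = P (n + 1) (At t) := by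
        intro t
        have h1 : (Polynomial.evalRingHom t) F = MvPolynomial.eval₂
            ((Polynomial.evalRingHom t).comp Polynomial.C)
            ((Polynomial.evalRingHom t) ∘ (fun v => Polynomial.C (coords A v)
              + Polynomial.C (coords E₀ v) * Polynomial.X)) p := by
          rw [hFdef]
          exact MvPolynomial.eval₂_comp_left _ _ _ _
        have h2 : (Polynomial.evalRingHom t).comp Polynomial.C = RingHom.id ℝ :=
          RingHom.ext fun a => by simp
        rw [h2, MvPolynomial.eval₂_id] at h1
        have h3 : ((Polynomial.evalRingHom t) ∘ (fun v => Polynomial.C (coords A v)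
            + Polynomial.C (coords E₀ v) * Polynomial.X)) = coords (At t) := by
          funext v
          simp [hcoordsAt t v]
        rw [h3] at h1
        rw [show F.eval t = (Polynomial.evalRingHom t) F from rfl, h1, ← hp (At t) (hAt_herm t)]
      have hF4 : ∀ t : ℝ, (F.eval t) ^ 4 = (realMat A').det * (S + t • 1).det := by
        intro t
        rw [hFeval t, ← hdet (At t) (hAt_herm t), hdetM t]
      have hGeval : ∀ t : ℝ, (Matrix.charpoly (-S)).eval t = (S + t • 1).det := by
        intro t
        have hmap : ((Matrix.charmatrix (-S)).map (Polynomial.evalRingHom t)) = S + t • 1 := by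
          ext u v
          by_cases huv : u = v
          · subst huv
            simp [Matrix.charmatrix_apply_eq, Matrix.one_apply]
            ring
          · simp [Matrix.charmatrix_apply_ne _ _ _ huv, Matrix.one_apply_ne huv]
        calc (Matrix.charpoly (-S)).eval t
            = (Polynomial.evalRingHom t) (Matrix.charmatrix (-S)).det := rfl
          _ = ((Matrix.charmatrix (-S)).map (Polynomial.evalRingHom t)).det :=
              RingHom.map_det _ _
          _ = (S + t • 1).det := by rw [hmap]
      have hc : (realMat A').det ≠ 0 := ne_of_gt hM'.det_pos
      have hpoly : F ^ 4 = Polynomial.C ((realMat A').det) * Matrix.charpoly (-S) :=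
        Polynomial.funext fun t => by
          simp only [Polynomial.eval_mul, Polynomial.eval_pow, Polynomial.eval_C]
          rw [hGeval t, hF4 t]
      have hGdeg : (Matrix.charpoly (-S)).natDegree = 4 := by
        rw [Matrix.charpoly_natDegree_eq_dim]
        simp
      have hF0 : F ≠ 0 := by
        intro h0
        have := hpoly
        rw [h0] at this
        have hne : Polynomial.C ((realMat A').det) * Matrix.charpoly (-S) ≠ 0 :=
          mul_ne_zero (by simpa using hc) (Matrix.charpoly_monic (-S)).ne_zero
        exact hne (by simpa using this.symm)
      have hdegF : F.natDegree = 1 := by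
        have h4 := congrArg Polynomial.natDegree hpoly
        rw [Polynomial.natDegree_pow, Polynomial.natDegree_C_mul hc, hGdeg] at h4
        omega
      set α := F.coeff 1 with hαdef
      set β := F.coeff 0 with hβdef
      have hform : F = Polynomial.C α * Polynomial.X + Polynomial.C β := by
        refine Polynomial.eq_X_add_C_of_degree_le_one ?_
        rw [Polynomial.degree_eq_natDegree hF0, hdegF]
        exact le_refl _
      have heval : ∀ t : ℝ, F.eval t = α * t + β := by
        intro t
        conv_lhs => rw [hform]
        simp
      have hα0 : α ≠ 0 := by
        have : F.leadingCoeff ≠ 0 := Polynomial.leadingCoeff_ne_zero.2 hF0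
        rwa [Polynomial.leadingCoeff, hdegF] at this
      have hAt0 : At 0 = A := by
        rw [hAtdef]
        simp
      have hβpos : 0 < β := by
        have hsub : A.submatrix (Fin.castLE (le_refl (n + 1))) (Fin.castLE (le_refl (n + 1)))
            = A := by
          have : (Fin.castLE (le_refl (n + 1)) : Fin (n + 1) → Fin (n + 1)) = id :=
            funext fun i => Fin.ext rfl
          rw [this, Matrix.submatrix_id_id]
        have hPA : 0 < P (n + 1) A := by
          have := hminors n (le_refl (n + 1))
          rwa [hsub] at this
        have : F.eval 0 = P (n + 1) A := by rw [hFeval 0, hAt0]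
        have hev0 : F.eval 0 = β := by rw [heval 0]; ring
        rw [← this, hev0] at hPA
        exact hPA
      have hbigpos : ∀ t : ℝ, (∑ i, ∑ j, |S i j|) + 1 ≤ t → 0 < F.eval t := by
        intro t ht
        have hSd : (S + t • 1).PosDef := posDef_add_smul_one hermS ht
        have hsd : (realMat (At t)).PosSemidef := (hsemi t).2 hSd.posSemidef
        have hdetpos : 0 < (realMat (At t)).det := by
          rw [hdetM t]
          exact mul_pos hM'.det_pos hSd.det_pos
        have hpd := posDef_of_posSemidef_det hsd (ne_of_gt hdetpos)
        have hq : QPosDef (At t) := (qposdef_iff_posDef (hAt_herm t)).2 hpd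
        rw [hFeval t]
        exact P_pos_of_qposdef (hP (n + 1)) (hAt_herm t) hq
      have hαpos : 0 < α := by
        rcases lt_or_gt_of_ne hα0 with hneg | hpos
        · exfalso
          set T := max ((∑ i, ∑ j, |S i j|) + 1) (β / (-α) + 1) with hT
          have h1 : 0 < F.eval T := hbigpos T (le_max_left _ _)
          have h2 : β / (-α) + 1 ≤ T := le_max_right _ _
          rw [heval T] at h1
          have hα' : 0 < -α := by linarith
          have : β / (-α) + 1 ≤ T := h2
          have hTα : α * T + β ≤ α * (β / (-α) + 1) + β := by
            have := mul_le_mul_of_nonpos_left this (le_of_lt hneg)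
            linarith
          have hcalc : α * (β / (-α) + 1) + β = α := by
            field_simp
            ring
          linarith
        · exact hpos
      have hFnz : ∀ t : ℝ, 0 ≤ t → F.eval t ≠ 0 := by
        intro t ht
        rw [heval t]
        positivity
      have hSpd : S.PosDef := by
        have heig : ∀ i, 0 < hermS.eigenvalues i := by
          intro i
          by_contra hcon
          push_neg at hcon
          set t := -hermS.eigenvalues i with htdef
          have ht0 : 0 ≤ t := by rw [htdef]; linarith
          have hv := hermS.mulVec_eigenvectorBasis i
          set v : (Fin 1 × Fin 4) → ℝ := ⇑(hermS.eigenvectorBasis i) with hvdef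
          have hvne : v ≠ 0 := by
            intro h0
            have := hermS.eigenvectorBasis.orthonormal.ne_zero i
            exact this (by ext u; exact congrFun h0 u)
          have hmv : (S + t • 1) *ᵥ v = 0 := by
            rw [Matrix.add_mulVec, Matrix.smul_mulVec, Matrix.one_mulVec, hv, htdef]
            ext u
            simp [neg_smul]
          have hdet0 : (S + t • 1).det = 0 :=
            Matrix.exists_mulVec_eq_zero_iff.1 ⟨v, hvne, hmv⟩
          have h4 := hF4 t
          rw [hdet0, mul_zero] at h4
          exact hFnz t ht0 (by
            have := pow_eq_zero_iff (n := 4) (by norm_num) |>.1 h4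
            exact this)
        have hsemiS : S.PosSemidef :=
          hermS.posSemidef_iff_eigenvalues_nonneg.2 fun i => (heig i).le
        have hdS : S.det ≠ 0 := by
          have h4 := hF4 0
          have h5 : (S + (0:ℝ) • 1) = S := by simp
          rw [h5] at h4
          intro h0
          rw [h0, mul_zero] at h4
          exact hFnz 0 le_rfl (pow_eq_zero_iff (n := 4) (by norm_num) |>.1 h4)
        exact posDef_of_posSemidef_det hsemiS hdS
      -- conclude at t = 0
      have hS0 : (S + (0:ℝ) • 1).PosDef := by simpa using hSpd
      have hsd : (realMat (At 0)).PosSemidef := (hsemi 0).2 hS0.posSemidef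
      have hdetpos : 0 < (realMat (At 0)).det := by
        rw [hdetM 0]
        exact mul_pos hM'.det_pos hS0.det_pos
      have hpd := posDef_of_posSemidef_det hsd (ne_of_gt hdetpos)
      have hq : QPosDef (At 0) := (qposdef_iff_posDef (hAt_herm 0)).2 hpd
      rwa [hAt0] at hq

/-- Quaternionic Sylvester criterion: a hyperhermitian `n×n` matrix is positive definite iff
the Moore determinants of all leading principal minors are positive. -/
theorem quaternionic_sylvester {n : ℕ} (P : ∀ k, Matrix (Fin k) (Fin k) ℍ[ℝ] → ℝ)
    (hP : ∀ k, IsMooreDet k (P k)) (A : Matrix (Fin n) (Fin n) ℍ[ℝ]) (hA : A.IsHermitian) :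
    QPosDef A ↔ ∀ (k : ℕ) (h : k + 1 ≤ n),
      0 < P (k + 1) (A.submatrix (Fin.castLE h) (Fin.castLE h)) := by
  constructor
  · intro hpos k h
    exact P_pos_of_qposdef (hP (k+1)) (isHermitian_submatrix hA _) (qposdef_submatrix hpos h)
  · exact qposdef_backward P hP n A hA
end
end

section
/- For convex compact sets K₁, K₂ in a finite-dimensional real vector space V whose union is convex, the supporting functionals satisfy h_{K₁∪K₂} = max{h_{K₁}, h_{K₂}} and h_{K₁∩K₂} = min{h_{K₁}, h_{K₂}} pointwise on V*. -/
noncomputable section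

def suppFn {E : Type*} [NormedAddCommGroup E] [NormedSpace ℝ E] (K : Set E)
    (y : E →L[ℝ] ℝ) : ℝ :=
  sSup (y '' K)

lemma segment_meets_inter {E : Type*} [NormedAddCommGroup E] [NormedSpace ℝ E]
    {K₁ K₂ : Set E} (hk₁ : IsClosed K₁) (hk₂ : IsClosed K₂)
    {x₁ x₂ : E} (hx₁ : x₁ ∈ K₁) (hx₂ : x₂ ∈ K₂)
    (hs : segment ℝ x₁ x₂ ⊆ K₁ ∪ K₂) :
    (segment ℝ x₁ x₂ ∩ (K₁ ∩ K₂)).Nonempty := by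
  have hpc : IsPreconnected (segment ℝ x₁ x₂) := (convex_segment x₁ x₂).isPreconnected
  exact (isPreconnected_closed_iff.mp hpc) K₁ K₂ hk₁ hk₂ hs
    ⟨x₁, left_mem_segment ℝ x₁ x₂, hx₁⟩ ⟨x₂, right_mem_segment ℝ x₁ x₂, hx₂⟩

lemma suppFn_isGreatest {E : Type*} [NormedAddCommGroup E] [NormedSpace ℝ E]
    {K : Set E} (hne : K.Nonempty) (hk : IsCompact K) (y : E →L[ℝ] ℝ) :
    ∃ x ∈ K, y x = suppFn K y ∧ ∀ z ∈ K, y z ≤ y x := by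
  obtain ⟨x, hxK, hmax⟩ := hk.exists_isMaxOn hne y.continuous.continuousOn
  refine ⟨x, hxK, ?_, fun z hz => hmax hz⟩
  have : IsGreatest (y '' K) (y x) :=
    ⟨Set.mem_image_of_mem y hxK, by rintro _ ⟨z, hz, rfl⟩; exact hmax hz⟩
  exact (this.csSup_eq).symm

lemma le_suppFn {E : Type*} [NormedAddCommGroup E] [NormedSpace ℝ E]
    {K : Set E} (hk : IsCompact K) {x : E} (hx : x ∈ K) (y : E →L[ℝ] ℝ) :
    y x ≤ suppFn K y :=
  le_csSup (hk.image y.continuous).bddAbove (Set.mem_image_of_mem y hx)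

/-- key half: if `h₁(y) ≤ h₂(y)` then some point of `K₁ ∩ K₂` has `y z ≥ h₁(y)`. -/
lemma exists_inter_ge {E : Type*} [NormedAddCommGroup E] [NormedSpace ℝ E]
    {K₁ K₂ : Set E}
    (h₁ : K₁.Nonempty) (hk₁ : IsCompact K₁)
    (h₂ : K₂.Nonempty) (hk₂ : IsCompact K₂)
    (hu : Convex ℝ (K₁ ∪ K₂)) (y : E →L[ℝ] ℝ)
    (hle : suppFn K₁ y ≤ suppFn K₂ y) :
    ∃ z ∈ K₁ ∩ K₂, suppFn K₁ y ≤ y z := by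
  obtain ⟨x₁, hx₁, he₁, -⟩ := suppFn_isGreatest h₁ hk₁ y
  obtain ⟨x₂, hx₂, he₂, -⟩ := suppFn_isGreatest h₂ hk₂ y
  have hseg : segment ℝ x₁ x₂ ⊆ K₁ ∪ K₂ :=
    hu.segment_subset (Or.inl hx₁) (Or.inr hx₂)
  obtain ⟨z, hzseg, hzK⟩ := segment_meets_inter hk₁.isClosed hk₂.isClosed hx₁ hx₂ hseg
  refine ⟨z, hzK, ?_⟩
  obtain ⟨a, b, ha, hb, hab, rfl⟩ := hzseg
  have h12 : y x₁ ≤ y x₂ := by rw [he₁, he₂]; exact hle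
  have : y (a • x₁ + b • x₂) = a * y x₁ + b * y x₂ := by
    simp [map_add, map_smul, smul_eq_mul]
  rw [this, ← he₁]
  have hb12 := mul_le_mul_of_nonneg_left h12 hb
  have hx : a * y x₁ + b * y x₁ = y x₁ := by rw [← add_mul, hab, one_mul]
  linarith

/-- For non-empty convex compact sets `K₁, K₂` in a finite-dimensional real vector space
whose union is convex, the intersection is non-empty and the supporting functionals satisfy
`h_{K₁∪K₂} = max{h_{K₁}, h_{K₂}}` and `h_{K₁∩K₂} = min{h_{K₁}, h_{K₂}}` on the dual space. -/
theorem suppFn_union_inter {E : Type*} [NormedAddCommGroup E] [NormedSpace ℝ E]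
    [FiniteDimensional ℝ E] (K₁ K₂ : Set E)
    (h₁ : K₁.Nonempty) (hc₁ : Convex ℝ K₁) (hk₁ : IsCompact K₁)
    (h₂ : K₂.Nonempty) (hc₂ : Convex ℝ K₂) (hk₂ : IsCompact K₂)
    (hu : Convex ℝ (K₁ ∪ K₂)) :
    (K₁ ∩ K₂).Nonempty ∧
    ∀ y : E →L[ℝ] ℝ,
      suppFn (K₁ ∪ K₂) y = max (suppFn K₁ y) (suppFn K₂ y) ∧
      suppFn (K₁ ∩ K₂) y = min (suppFn K₁ y) (suppFn K₂ y) := by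
  obtain ⟨x₁, hx₁⟩ := h₁
  obtain ⟨x₂, hx₂⟩ := h₂
  have hne : (K₁ ∩ K₂).Nonempty := by
    obtain ⟨z, -, hz⟩ := segment_meets_inter hk₁.isClosed hk₂.isClosed hx₁ hx₂
      (hu.segment_subset (Or.inl hx₁) (Or.inr hx₂))
    exact ⟨z, hz⟩
  refine ⟨hne, fun y => ⟨?_, ?_⟩⟩
  · have : y '' (K₁ ∪ K₂) = y '' K₁ ∪ y '' K₂ := Set.image_union y K₁ K₂
    rw [suppFn, this, csSup_union (hk₁.image y.continuous).bddAbove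
      (Set.Nonempty.image y ⟨x₁, hx₁⟩)
      (hk₂.image y.continuous).bddAbove (Set.Nonempty.image y ⟨x₂, hx₂⟩)]
    rfl
  · apply le_antisymm
    · apply le_min
      · exact csSup_le_csSup (hk₁.image y.continuous).bddAbove
          (Set.Nonempty.image y hne)
          (Set.image_mono (f := y) Set.inter_subset_left)
      · exact csSup_le_csSup (hk₂.image y.continuous).bddAbove
          (Set.Nonempty.image y hne)
          (Set.image_mono (f := y) Set.inter_subset_right)
    · rcases le_total (suppFn K₁ y) (suppFn K₂ y) with h | h
      · obtain ⟨z, hz, hzy⟩ := exists_inter_ge ⟨x₁, hx₁⟩ hk₁ ⟨x₂, hx₂⟩ hk₂ hu y h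
        calc min (suppFn K₁ y) (suppFn K₂ y) ≤ suppFn K₁ y := min_le_left _ _
          _ ≤ y z := hzy
          _ ≤ suppFn (K₁ ∩ K₂) y := le_suppFn (hk₁.inter_right hk₂.isClosed) hz y
      · obtain ⟨z, hz, hzy⟩ := exists_inter_ge ⟨x₂, hx₂⟩ hk₂ ⟨x₁, hx₁⟩ hk₁ (Set.union_comm K₁ K₂ ▸ hu) y h
        rw [Set.inter_comm] at hz
        calc min (suppFn K₁ y) (suppFn K₂ y) ≤ suppFn K₂ y := min_le_right _ _
          _ ≤ y z := hzy
          _ ≤ suppFn (K₁ ∩ K₂) y := le_suppFn (hk₁.inter_right hk₂.isClosed) hz y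
end
end
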